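/- arXiv:1503.07118 — 14 statements merged into one kernel-verified Lean document; each statement's English description precedes it below -/
import Mathlib

section
/- Let P and Q be probability measures on a measurable space (A, F) with P absolutely continuous with respect to Q. Suppose there are constants β₁ ∈ (0,1) and β₂ ∈ [0,1] such that β₂ ≤ dP/dQ(a) ≤ 1/β₁ for Q-almost every a. Then the relative entropy (in nats) satisfies D(P‖Q) ≤ (1/2)·( ln(1/β₁)/(1−β₁) − β₂ )·|P−Q|, where |P−Q| is the total variation distance. -/
open MeasureTheory

/-- Relative entropy (in nats): `D(P‖Q) = ∫ ln(dP/dQ) dP`. -/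
noncomputable def relEntropyNats {A : Type*} [MeasurableSpace A] (P Q : Measure A) : ℝ :=
  ∫ a, Real.log ((P.rnDeriv Q a).toReal) ∂P

/-- Total variation distance: `|P−Q| = 2 ⨆_{E measurable} |P(E) − Q(E)|`. -/
noncomputable def tvDist {A : Type*} [MeasurableSpace A] (P Q : Measure A) : ℝ :=
  2 * ⨆ E : {E : Set A // MeasurableSet E}, |(P E.1).toReal - (Q E.1).toReal|

/-! With `f = dP/dQ` we have `D(P‖Q) = ∫ f log f dQ`. The function `t ↦ t log t` is convex and
vanishes at `1`; on `[1, 1/β₁]` it therefore lies below its chord, of slope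
`L = log (1/β₁) / (1 - β₁)`, and on `[β₂, 1]` below the line of slope `β₂` through `(1, 0)`, since
`β₂ log β₂ ≤ β₂ (β₂ - 1)`. Hence `f log f ≤ L (f - 1)⁺ - β₂ (1 - f)⁺`, and both `∫ (f - 1)⁺ dQ` and
`∫ (1 - f)⁺ dQ` equal `P(f > 1) - Q(f > 1) ≤ |P - Q| / 2`. -/

open Real Set

namespace Real

lemma convexOn_mul_log_sub_mul_sub_one (c : ℝ) :
    ConvexOn ℝ (Ici 0) fun t : ℝ ↦ t * log t - c * (t - 1) := by
  refine ((convexOn_mul_log.sub ((LinearMap.mulLeft ℝ c).concaveOn (convex_Ici 0))).add_const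
    c).congr fun t _ ↦ ?_
  simp only [Pi.add_apply, Pi.sub_apply, LinearMap.mulLeft_apply]
  ring

lemma mul_log_le_of_mem_Icc {c x y t : ℝ} (hx : 0 ≤ x) (ht : t ∈ Icc x y)
    (hxc : x * log x ≤ c * (x - 1)) (hyc : y * log y ≤ c * (y - 1)) :
    t * log t ≤ c * (t - 1) := by
  have := (convexOn_mul_log_sub_mul_sub_one c).le_max_of_mem_Icc hx
    (hx.trans (ht.1.trans ht.2)) ht
  have : max (x * log x - c * (x - 1)) (y * log y - c * (y - 1)) ≤ 0 :=
    max_le (by linarith) (by linarith)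
  linarith

lemma mul_log_le_mul_sub_one {b t : ℝ} (hb : 0 ≤ b) (ht : t ∈ Icc b 1) :
    t * log t ≤ b * (t - 1) := by
  refine mul_log_le_of_mem_Icc hb ht ?_ (by simp)
  rcases hb.eq_or_lt with rfl | hb
  · simp
  · exact mul_le_mul_of_nonneg_left (log_le_sub_one_of_pos hb) hb.le

lemma mul_log_le_log_div_mul_sub_one {β t : ℝ} (hβ : β ∈ Ioo 0 1) (ht : t ∈ Icc 1 (1 / β)) :
    t * log t ≤ log (1 / β) / (1 - β) * (t - 1) := by
  obtain ⟨hβ0, hβ1⟩ := hβ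
  refine mul_log_le_of_mem_Icc zero_le_one ht (by simp) (le_of_eq ?_)
  field_simp

lemma mul_log_le_posPart {β₁ β₂ t : ℝ} (hβ₁ : β₁ ∈ Ioo 0 1) (hβ₂ : 0 ≤ β₂)
    (ht : t ∈ Icc β₂ (1 / β₁)) :
    t * log t ≤ log (1 / β₁) / (1 - β₁) * max (t - 1) 0 - β₂ * max (1 - t) 0 := by
  rcases le_total t 1 with h | h
  · rw [max_eq_right (by linarith), max_eq_left (by linarith)]
    linarith [mul_log_le_mul_sub_one hβ₂ ⟨ht.1, h⟩]
  · rw [max_eq_left (by linarith), max_eq_right (by linarith)]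
    linarith [mul_log_le_log_div_mul_sub_one hβ₁ ⟨h, ht.2⟩]

lemma one_le_log_one_div_div_one_sub {β : ℝ} (hβ : β ∈ Ioo 0 1) : 1 ≤ log (1 / β) / (1 - β) := by
  rw [le_div_iff₀ (sub_pos.2 hβ.2), one_mul, one_div, log_inv]
  linarith [log_le_sub_one_of_pos hβ.1]

end Real

namespace MeasureTheory

variable {A : Type*} [MeasurableSpace A] {P Q : Measure A}

lemma relEntropyNats_eq_integral_mul_log [SigmaFinite P] [P.HaveLebesgueDecomposition Q]
    (hPQ : P ≪ Q) :
    relEntropyNats P Q = ∫ a, (P.rnDeriv Q a).toReal * log (P.rnDeriv Q a).toReal ∂Q :=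
  (integral_toReal_rnDeriv_mul hPQ).symm

lemma two_mul_abs_sub_measureReal_le_tvDist [IsFiniteMeasure P] [IsFiniteMeasure Q] {E : Set A}
    (hE : MeasurableSet E) : 2 * |P.real E - Q.real E| ≤ tvDist P Q := by
  have hbdd : BddAbove (range fun F : {F : Set A // MeasurableSet F} ↦
      |(P F.1).toReal - (Q F.1).toReal|) := by
    refine ⟨P.real univ + Q.real univ, ?_⟩
    rintro _ ⟨F, rfl⟩
    calc |P.real F.1 - Q.real F.1| ≤ |P.real F.1| + |Q.real F.1| := abs_sub _ _
      _ ≤ P.real univ + Q.real univ := by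
        rw [abs_of_nonneg measureReal_nonneg, abs_of_nonneg measureReal_nonneg]
        exact add_le_add (measureReal_mono (subset_univ _)) (measureReal_mono (subset_univ _))
  rw [tvDist]
  gcongr
  exact le_ciSup hbdd ⟨E, hE⟩

lemma integral_max_toReal_rnDeriv_sub_one [IsFiniteMeasure P] [IsFiniteMeasure Q] (hPQ : P ≪ Q) :
    ∫ a, max ((P.rnDeriv Q a).toReal - 1) 0 ∂Q =
      P.real {a | 1 < (P.rnDeriv Q a).toReal} - Q.real {a | 1 < (P.rnDeriv Q a).toReal} := by
  set E := {a | 1 < (P.rnDeriv Q a).toReal}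
  have hE : MeasurableSet E :=
    measurableSet_lt measurable_const (Measure.measurable_rnDeriv P Q).ennreal_toReal
  have hmax : (fun a ↦ max ((P.rnDeriv Q a).toReal - 1) 0) =
      E.indicator fun a ↦ (P.rnDeriv Q a).toReal - 1 := by
    ext a
    by_cases ha : a ∈ E
    · simp only [indicator_of_mem ha]
      exact max_eq_left (sub_nonneg.2 (le_of_lt ha))
    · simp only [indicator_of_notMem ha]
      exact max_eq_right (sub_nonpos.2 (not_lt.1 ha))
  rw [hmax, integral_indicator hE, integral_sub Measure.integrable_toReal_rnDeriv.integrableOn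
    (integrableOn_const (measure_ne_top Q E)), Measure.setIntegral_toReal_rnDeriv hPQ,
    setIntegral_const, smul_eq_mul, mul_one]

lemma integral_max_one_sub_toReal_rnDeriv [IsProbabilityMeasure P] [IsProbabilityMeasure Q]
    (hPQ : P ≪ Q) :
    ∫ a, max (1 - (P.rnDeriv Q a).toReal) 0 ∂Q = ∫ a, max ((P.rnDeriv Q a).toReal - 1) 0 ∂Q := by
  have hsub : Integrable (fun a ↦ (P.rnDeriv Q a).toReal - 1) Q :=
    Measure.integrable_toReal_rnDeriv.sub (integrable_const 1)
  have hzero : ∫ a, ((P.rnDeriv Q a).toReal - 1) ∂Q = 0 := by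
    rw [integral_sub Measure.integrable_toReal_rnDeriv (integrable_const 1),
      Measure.integral_toReal_rnDeriv hPQ]
    simp
  have hmax : ∀ x : ℝ, max (1 - x) 0 = max (x - 1) 0 - (x - 1) := fun x ↦ by
    rcases le_total x 1 with h | h
    · rw [max_eq_left (by linarith), max_eq_right (by linarith)]; ring
    · rw [max_eq_right (by linarith), max_eq_left (by linarith)]; ring
  simp only [hmax]
  rw [integral_sub hsub.pos_part hsub, hzero, sub_zero]

lemma integrable_mul_log_of_ae_le [IsFiniteMeasure Q] {f g : A → ℝ} (hf : Measurable f)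
    (hf0 : ∀ a, 0 ≤ f a) (hfi : Integrable f Q) (hg : Integrable g Q)
    (hle : ∀ᵐ a ∂Q, f a * log (f a) ≤ g a) :
    Integrable (fun a ↦ f a * log (f a)) Q :=
  integrable_of_le_of_le (hf.mul (measurable_log.comp hf)).aestronglyMeasurable
    (ae_of_all _ fun a ↦ self_sub_one_le_mul_log (hf0 a)) hle
    (hfi.sub (integrable_const 1)) hg

end MeasureTheory

theorem reverse_pinsker_refined {A : Type*} [MeasurableSpace A]
    (P Q : Measure A) [IsProbabilityMeasure P] [IsProbabilityMeasure Q]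
    (hPQ : P ≪ Q) (β₁ β₂ : ℝ) (hβ₁ : β₁ ∈ Set.Ioo (0 : ℝ) 1) (hβ₂ : β₂ ∈ Set.Icc (0 : ℝ) 1)
    (hbound : ∀ᵐ a ∂Q, β₂ ≤ ((P.rnDeriv Q) a).toReal ∧ ((P.rnDeriv Q) a).toReal ≤ 1 / β₁) :
    relEntropyNats P Q ≤ (1 / 2) * (Real.log (1 / β₁) / (1 - β₁) - β₂) * tvDist P Q := by
  set f : A → ℝ := fun a ↦ (P.rnDeriv Q a).toReal
  set L := log (1 / β₁) / (1 - β₁)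
  set E := {a | 1 < f a}
  have hpos : Integrable (fun a ↦ max (f a - 1) 0) Q :=
    (Measure.integrable_toReal_rnDeriv.sub (integrable_const 1)).pos_part
  have hneg : Integrable (fun a ↦ max (1 - f a) 0) Q :=
    ((integrable_const 1).sub Measure.integrable_toReal_rnDeriv).pos_part
  have hupper : Integrable (fun a ↦ L * max (f a - 1) 0 - β₂ * max (1 - f a) 0) Q :=
    (hpos.const_mul L).sub (hneg.const_mul β₂)
  have hle : ∀ᵐ a ∂Q, f a * log (f a) ≤ L * max (f a - 1) 0 - β₂ * max (1 - f a) 0 := by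
    filter_upwards [hbound] with a ha using mul_log_le_posPart hβ₁ hβ₂.1 ha
  have hE : 2 * (P.real E - Q.real E) ≤ tvDist P Q :=
    le_trans (by gcongr; exact le_abs_self _) (two_mul_abs_sub_measureReal_le_tvDist
      (measurableSet_lt measurable_const (Measure.measurable_rnDeriv P Q).ennreal_toReal))
  have hβ₂L : β₂ ≤ L := hβ₂.2.trans (one_le_log_one_div_div_one_sub hβ₁)
  calc relEntropyNats P Q = ∫ a, f a * log (f a) ∂Q := relEntropyNats_eq_integral_mul_log hPQ
    _ ≤ ∫ a, (L * max (f a - 1) 0 - β₂ * max (1 - f a) 0) ∂Q :=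
      integral_mono_ae (integrable_mul_log_of_ae_le (Measure.measurable_rnDeriv P Q).ennreal_toReal
        (fun _ ↦ ENNReal.toReal_nonneg) Measure.integrable_toReal_rnDeriv hupper hle) hupper hle
    _ = (L - β₂) * (P.real E - Q.real E) := by
      rw [integral_sub (hpos.const_mul L) (hneg.const_mul β₂), integral_const_mul,
        integral_const_mul, integral_max_one_sub_toReal_rnDeriv hPQ,
        integral_max_toReal_rnDeriv_sub_one hPQ]
      ring
    _ ≤ (L - β₂) * (tvDist P Q / 2) := by gcongr; linarith
    _ = (1 / 2) * (L - β₂) * tvDist P Q := by ring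
end

section
/- Let P and Q be probability measures on a measurable space (A, F) with P absolutely continuous with respect to Q, and let η ∈ (0,1) be such that 1−η ≤ dP/dQ(a) ≤ 1+η for Q-almost every a. Then the relative entropy (in nats) satisfies D(P‖Q) ≤ η². -/
open MeasureTheory

theorem relEntropy_le_eta_sq {A : Type*} [MeasurableSpace A]
    (P Q : Measure A) [IsProbabilityMeasure P] [IsProbabilityMeasure Q]
    (hPQ : P ≪ Q) (η : ℝ) (hη : η ∈ Set.Ioo (0 : ℝ) 1)
    (hbound : ∀ᵐ a ∂Q, 1 - η ≤ ((P.rnDeriv Q) a).toReal ∧ ((P.rnDeriv Q) a).toReal ≤ 1 + η) :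
    relEntropyNats P Q ≤ η ^ 2 := by
  obtain ⟨hη0, hη1⟩ := hη
  set g : A → ℝ := fun a => ((P.rnDeriv Q) a).toReal with hg
  have hmeas : Measurable g := (Measure.measurable_rnDeriv P Q).ennreal_toReal
  have hboundP : ∀ᵐ a ∂P, 1 - η ≤ g a ∧ g a ≤ 1 + η := hPQ.ae_le hbound
  -- integrability of g w.r.t. P and Q
  have hgQ : Integrable g Q := by
    refine Integrable.mono' (integrable_const (1 + η)) hmeas.aestronglyMeasurable ?_
    filter_upwards [hbound] with a ⟨h1, h2⟩
    rw [Real.norm_eq_abs, abs_of_nonneg ENNReal.toReal_nonneg]; exact h2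
  have hgP : Integrable g P := by
    refine Integrable.mono' (integrable_const (1 + η)) hmeas.aestronglyMeasurable ?_
    filter_upwards [hboundP] with a ⟨h1, h2⟩
    rw [Real.norm_eq_abs, abs_of_nonneg ENNReal.toReal_nonneg]; exact h2
  have hlogP : Integrable (fun a => Real.log (g a)) P := by
    refine Integrable.mono' (integrable_const (max (-Real.log (1 - η)) (Real.log (1 + η))))
      (hmeas.log.aestronglyMeasurable) ?_
    filter_upwards [hboundP] with a ⟨h1, h2⟩
    have hpos : 0 < g a := lt_of_lt_of_le (by linarith) h1
    rw [Real.norm_eq_abs, abs_le]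
    constructor
    · have : Real.log (1 - η) ≤ Real.log (g a) := Real.log_le_log (by linarith) h1
      have := neg_le_neg this
      calc -(max (-Real.log (1 - η)) (Real.log (1 + η))) ≤ -(-Real.log (1 - η)) := by
            exact neg_le_neg (le_max_left _ _)
        _ = Real.log (1 - η) := by ring
        _ ≤ Real.log (g a) := Real.log_le_log (by linarith) h1
    · calc Real.log (g a) ≤ Real.log (1 + η) := Real.log_le_log hpos h2
        _ ≤ max (-Real.log (1 - η)) (Real.log (1 + η)) := le_max_right _ _
  -- Step 1: D ≤ ∫ (g - 1) dP
  have step1 : relEntropyNats P Q ≤ ∫ a, (g a - 1) ∂P := by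
    refine integral_mono_ae hlogP (hgP.sub (integrable_const 1)) ?_
    filter_upwards [hboundP] with a ⟨h1, h2⟩
    have hpos : 0 < g a := lt_of_lt_of_le (by linarith) h1
    exact Real.log_le_sub_one_of_pos hpos
  -- ∫ g dQ = 1
  have hIntQ : ∫ a, g a ∂Q = 1 := by
    rw [Measure.integral_toReal_rnDeriv hPQ]
    simp
  -- ∫ (g-1) dP = ∫ (g-1)*g dQ
  have step2 : ∫ a, (g a - 1) ∂P = ∫ a, g a * (g a - 1) ∂Q := by
    rw [← integral_rnDeriv_smul hPQ (f := fun a => g a - 1)]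
    simp [smul_eq_mul, hg]
  -- ∫ g*(g-1) dQ = ∫ (g-1)^2 dQ
  have hsq : Integrable (fun a => (g a - 1) ^ 2) Q := by
    refine Integrable.mono' (integrable_const (η ^ 2)) ?_ ?_
    · exact ((hmeas.sub measurable_const).pow_const 2).aestronglyMeasurable
    · filter_upwards [hbound] with a ⟨h1, h2⟩
      rw [Real.norm_eq_abs, abs_of_nonneg (sq_nonneg (g a - 1))]
      have : |g a - 1| ≤ η := abs_le.mpr ⟨by linarith, by linarith⟩
      calc (g a - 1) ^ 2 = |g a - 1| ^ 2 := (sq_abs _).symm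
        _ ≤ η ^ 2 := by nlinarith [abs_nonneg (g a - 1)]
  have step3 : ∫ a, g a * (g a - 1) ∂Q = ∫ a, (g a - 1) ^ 2 ∂Q := by
    have : ∀ a, g a * (g a - 1) = (g a - 1) ^ 2 + (g a - 1) := by intro a; ring
    simp_rw [this]
    rw [integral_add hsq (hgQ.sub (integrable_const 1)) (f := fun a => (g a - 1) ^ 2)
      (g := fun a => g a - 1), integral_sub hgQ (integrable_const 1), hIntQ]
    simp
  have step4 : ∫ a, (g a - 1) ^ 2 ∂Q ≤ η ^ 2 := by
    calc ∫ a, (g a - 1) ^ 2 ∂Q ≤ ∫ _, η ^ 2 ∂Q := by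
          refine integral_mono_ae hsq (integrable_const _) ?_
          filter_upwards [hbound] with a ⟨h1, h2⟩
          have : |g a - 1| ≤ η := abs_le.mpr ⟨by linarith, by linarith⟩
          calc (g a - 1) ^ 2 = |g a - 1| ^ 2 := (sq_abs _).symm
            _ ≤ η ^ 2 := by nlinarith [abs_nonneg (g a - 1)]
      _ = η ^ 2 := by simp
  linarith [step1, step2 ▸ step3 ▸ step4]
end

section
/- Let P and Q be mutually absolutely continuous probability measures on a measurable space (A, F), and let i_{P‖Q}(a) = ln(dP/dQ)(a) denote the relative information (in nats). Then for every η > 0, the total variation distance satisfies |P−Q| ≥ (1 − exp(−η))·( P({a : i_{P‖Q}(a) ≥ η}) + exp(η)·P({a : i_{P‖Q}(a) ≤ −η}) ). -/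
open MeasureTheory

/-!
On `{i ≥ η}` the density `dP/dQ` is at least `exp η`, so `Q ≤ exp (-η) P` there and the event
witnesses `P - Q ≥ (1 - exp (-η)) P`; on `{i ≤ -η}` the density is at most `exp (-η)`, so
`P ≤ exp (-η) Q` and that event witnesses `Q - P ≥ (exp η - 1) P`. Adding the two witnesses
bounds `2 sup_E |P(E) - Q(E)|`.
-/

open Real
open scoped ENNReal

namespace ENNReal

variable {x : ℝ≥0∞} {t : ℝ}

-- `log ⊤.toReal = log 0 = 0`, so the hypotheses exclude `x = 0` and `x = ⊤` respectively.
theorem ofReal_exp_le_of_le_log_toReal (ht : 0 < t) (h : t ≤ Real.log x.toReal) :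
    ENNReal.ofReal (exp t) ≤ x := by
  have hx : 0 < x.toReal := by
    by_contra! hx
    rw [le_antisymm hx toReal_nonneg, Real.log_zero] at h
    linarith
  exact ofReal_le_of_le_toReal ((le_log_iff_exp_le hx).1 h)

theorem le_ofReal_exp_of_log_toReal_le (ht : t < 0) (h : Real.log x.toReal ≤ t) :
    x ≤ ENNReal.ofReal (exp t) := by
  have hx : x ≠ ⊤ := by
    rintro rfl
    rw [toReal_top, Real.log_zero] at h
    linarith
  rw [le_ofReal_iff_toReal_le hx (exp_pos t).le]
  rcases toReal_nonneg.eq_or_lt with hx0 | hx0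
  · rw [← hx0]
    exact (exp_pos t).le
  · exact (log_le_iff_le_exp hx0).1 h

end ENNReal

namespace MeasureTheory.Measure

variable {A : Type*} [MeasurableSpace A] {μ ν : Measure A} {s : Set A} {c : ℝ≥0∞}

theorem mul_le_of_le_rnDeriv (h : ∀ a ∈ s, c ≤ μ.rnDeriv ν a) : c * ν s ≤ μ s :=
  calc c * ν s = ∫⁻ _ in s, c ∂ν := (setLIntegral_const s c).symm
    _ ≤ ∫⁻ a in s, μ.rnDeriv ν a ∂ν := setLIntegral_mono (μ.measurable_rnDeriv ν) h
    _ ≤ μ s := setLIntegral_rnDeriv_le s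

theorem le_mul_of_rnDeriv_le [HaveLebesgueDecomposition μ ν] [SFinite ν] (hμν : μ ≪ ν)
    (h : ∀ a ∈ s, μ.rnDeriv ν a ≤ c) : μ s ≤ c * ν s :=
  calc μ s = ∫⁻ a in s, μ.rnDeriv ν a ∂ν := (setLIntegral_rnDeriv hμν s).symm
    _ ≤ ∫⁻ _ in s, c ∂ν := setLIntegral_mono measurable_const h
    _ = c * ν s := setLIntegral_const s c

variable {t : ℝ}

theorem exp_mul_measureReal_le_of_le_log_rnDeriv [IsFiniteMeasure μ] (ht : 0 < t) :
    exp t * ν.real {a | t ≤ log (μ.rnDeriv ν a).toReal} ≤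
      μ.real {a | t ≤ log (μ.rnDeriv ν a).toReal} := by
  have h := mul_le_of_le_rnDeriv (s := {a | t ≤ log (μ.rnDeriv ν a).toReal})
    fun a ha ↦ ENNReal.ofReal_exp_le_of_le_log_toReal ht ha
  have h' := ENNReal.toReal_mono (measure_ne_top μ _) h
  rwa [ENNReal.toReal_mul, ENNReal.toReal_ofReal (exp_pos t).le] at h'

theorem measureReal_le_exp_mul_of_log_rnDeriv_le [IsFiniteMeasure ν]
    [HaveLebesgueDecomposition μ ν] (hμν : μ ≪ ν) (ht : t < 0) :
    μ.real {a | log (μ.rnDeriv ν a).toReal ≤ t} ≤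
      exp t * ν.real {a | log (μ.rnDeriv ν a).toReal ≤ t} := by
  have h := le_mul_of_rnDeriv_le (s := {a | log (μ.rnDeriv ν a).toReal ≤ t}) hμν
    fun a ha ↦ ENNReal.le_ofReal_exp_of_log_toReal_le ht ha
  have h' := ENNReal.toReal_mono (ENNReal.mul_ne_top ENNReal.ofReal_ne_top (measure_ne_top ν _)) h
  rwa [ENNReal.toReal_mul, ENNReal.toReal_ofReal (exp_pos t).le] at h'

end MeasureTheory.Measure

section tvDist

variable {A : Type*} [MeasurableSpace A] {P Q : Measure A} [IsFiniteMeasure P]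
  [IsFiniteMeasure Q] {E F : Set A}

theorem two_mul_abs_sub_le_tvDist (hE : MeasurableSet E) :
    2 * |P.real E - Q.real E| ≤ tvDist P Q := by
  have hbdd : BddAbove (Set.range fun E : {E : Set A // MeasurableSet E} ↦
      |(P E.1).toReal - (Q E.1).toReal|) := by
    refine ⟨P.real Set.univ + Q.real Set.univ, ?_⟩
    rintro _ ⟨E, rfl⟩
    change |P.real E.1 - Q.real E.1| ≤ _
    have hP := measureReal_mono (μ := P) (Set.subset_univ E.1)
    have hQ := measureReal_mono (μ := Q) (Set.subset_univ E.1)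
    have hP0 := measureReal_nonneg (μ := P) (s := E.1)
    have hQ0 := measureReal_nonneg (μ := Q) (s := E.1)
    exact abs_le.2 ⟨by linarith, by linarith⟩
  exact mul_le_mul_of_nonneg_left (le_ciSup hbdd ⟨E, hE⟩) zero_le_two

theorem sub_add_sub_le_tvDist (hE : MeasurableSet E) (hF : MeasurableSet F) :
    P.real E - Q.real E + (Q.real F - P.real F) ≤ tvDist P Q := by
  have hE' := two_mul_abs_sub_le_tvDist (P := P) (Q := Q) hE
  have hF' := two_mul_abs_sub_le_tvDist (P := P) (Q := Q) hF
  have := le_abs_self (P.real E - Q.real E)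
  have := neg_abs_le (P.real F - Q.real F)
  linarith

end tvDist

theorem tv_lower_bound_relative_information_general {A : Type*} [MeasurableSpace A]
    (P Q : Measure A) [IsProbabilityMeasure P] [IsProbabilityMeasure Q]
    (hPQ : P ≪ Q) :
    ∀ η : ℝ, 0 < η →
      tvDist P Q ≥ (1 - Real.exp (-η)) *
        ((P {a | η ≤ Real.log ((P.rnDeriv Q a).toReal)}).toReal +
          Real.exp η * (P {a | Real.log ((P.rnDeriv Q a).toReal) ≤ -η}).toReal) := by
  intro η hη
  set Ehi := {a | η ≤ Real.log (P.rnDeriv Q a).toReal}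
  set Elo := {a | Real.log (P.rnDeriv Q a).toReal ≤ -η}
  have hinfo : Measurable fun a ↦ Real.log (P.rnDeriv Q a).toReal :=
    (P.measurable_rnDeriv Q).ennreal_toReal.log
  have htv : P.real Ehi - Q.real Ehi + (Q.real Elo - P.real Elo) ≤ tvDist P Q :=
    sub_add_sub_le_tvDist (measurableSet_le measurable_const hinfo)
      (measurableSet_le hinfo measurable_const)
  have hexp : Real.exp (-η) * Real.exp η = 1 := by
    rw [← Real.exp_add, neg_add_cancel, Real.exp_zero]
  have hhi : Q.real Ehi ≤ Real.exp (-η) * P.real Ehi :=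
    calc Q.real Ehi = Real.exp (-η) * (Real.exp η * Q.real Ehi) := by
          rw [← mul_assoc, hexp, one_mul]
      _ ≤ Real.exp (-η) * P.real Ehi := by
          gcongr
          exact Measure.exp_mul_measureReal_le_of_le_log_rnDeriv hη
  have hlo : Real.exp η * P.real Elo ≤ Q.real Elo :=
    calc Real.exp η * P.real Elo ≤ Real.exp η * (Real.exp (-η) * Q.real Elo) := by
          gcongr
          exact Measure.measureReal_le_exp_mul_of_log_rnDeriv_le hPQ (neg_neg_of_pos hη)
      _ = Q.real Elo := by rw [← mul_assoc, mul_comm (Real.exp η), hexp, one_mul]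
  have hlhs : (1 - Real.exp (-η)) * (P.real Ehi + Real.exp η * P.real Elo) =
      P.real Ehi - Real.exp (-η) * P.real Ehi + (Real.exp η * P.real Elo - P.real Elo) := by
    linear_combination (-P.real Elo) * hexp
  rw [ge_iff_le, ← measureReal_def, ← measureReal_def, hlhs]
  linarith

theorem tv_lower_bound_relative_information {A : Type*} [MeasurableSpace A]
    (P Q : Measure A) [IsProbabilityMeasure P] [IsProbabilityMeasure Q]
    (hPQ : P ≪ Q) (hQP : Q ≪ P) :
    ∀ η : ℝ, 0 < η →
      tvDist P Q ≥ (1 - Real.exp (-η)) *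
        ((P {a | η ≤ Real.log ((P.rnDeriv Q a).toReal)}).toReal +
          Real.exp η * (P {a | Real.log ((P.rnDeriv Q a).toReal) ≤ -η}).toReal) :=
  tv_lower_bound_relative_information_general P Q hPQ
end

section
/- Fix η > 0 and let P and Q be the probability measures on the two-element set A = {a, b} defined by P(a) = (exp(η) − 1)/(2·sinh(η)), Q(a) = (1 − exp(−η))/(2·sinh(η)), P(b) = 1 − P(a), Q(b) = 1 − Q(a). Then the lower bound on the total variation distance is attained with equality: |P−Q| = (1 − exp(−η))·( P({x : i_{P‖Q}(x) ≥ η}) + exp(η)·P({x : i_{P‖Q}(x) ≤ −η}) ), where i_{P‖Q}(x) = ln(P(x)/Q(x)) and |P−Q| = |P(a)−Q(a)| + |P(b)−Q(b)|. -/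
open scoped Classical

theorem tv_lower_bound_attained (η : ℝ) (hη : 0 < η)
    (P Q : Bool → ℝ)
    (hPa : P true = (Real.exp η - 1) / (2 * Real.sinh η))
    (hQa : Q true = (1 - Real.exp (-η)) / (2 * Real.sinh η))
    (hPb : P false = 1 - P true)
    (hQb : Q false = 1 - Q true) :
    ∑ x, |P x - Q x| =
      (1 - Real.exp (-η)) *
        ((∑ x ∈ Finset.univ.filter (fun x => η ≤ Real.log (P x / Q x)), P x) +
          Real.exp η * ∑ x ∈ Finset.univ.filter (fun x => Real.log (P x / Q x) ≤ -η), P x) := by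
  have hD : 2 * Real.sinh η = Real.exp η - Real.exp (-η) := by
    rw [Real.sinh_eq]; ring
  have he1 : 1 < Real.exp η := by
    have := Real.exp_lt_exp.mpr hη; simpa using this
  have hDpos : (0:ℝ) < 2 * Real.sinh η := by
    rw [hD]
    have : Real.exp (-η) < Real.exp η := Real.exp_lt_exp.mpr (by linarith)
    linarith
  have hen : Real.exp (-η) < 1 := Real.exp_lt_one_iff.mpr (by linarith)
  have henpos : 0 < Real.exp (-η) := Real.exp_pos _
  have hQt_pos : 0 < Q true := by
    rw [hQa]; apply div_pos (by linarith) hDpos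
  have hPt_pos : 0 < P true := by
    rw [hPa]; apply div_pos (by linarith) hDpos
  have hPf : P false = (1 - Real.exp (-η)) / (2 * Real.sinh η) := by
    rw [hPb, hPa]; field_simp; rw [hD]; ring
  have hQf : Q false = (Real.exp η - 1) / (2 * Real.sinh η) := by
    rw [hQb, hQa]; field_simp; rw [hD]; ring
  have hxy : Real.exp η * Real.exp (-η) = 1 := by
    rw [← Real.exp_add]; simp
  have hDne : (2*Real.sinh η) ≠ 0 := ne_of_gt hDpos
  have hratio_t : P true / Q true = Real.exp η := by
    rw [hPa, hQa]
    rw [div_div_div_eq]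
    rw [div_eq_iff (ne_of_gt (by nlinarith))]
    nlinarith [hxy]
  have hratio_f : P false / Q false = Real.exp (-η) := by
    rw [hPf, hQf]
    rw [div_div_div_eq]
    rw [div_eq_iff (ne_of_gt (by nlinarith))]
    nlinarith [hxy]
  have hlog_t : Real.log (P true / Q true) = η := by rw [hratio_t, Real.log_exp]
  have hlog_f : Real.log (P false / Q false) = -η := by rw [hratio_f, Real.log_exp]
  have habs_t : |P true - Q true| = P true - Q true := by
    rw [abs_of_nonneg]
    rw [hPa, hQa, div_sub_div_same]
    apply div_nonneg _ (le_of_lt hDpos)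
    nlinarith [hxy, Real.exp_pos η, sq_nonneg (Real.exp η - 1)]
  have habs_f : |P false - Q false| = Q false - P false := by
    rw [abs_of_nonpos]
    · ring
    rw [hPf, hQf, div_sub_div_same]
    apply div_nonpos_of_nonpos_of_nonneg _ (le_of_lt hDpos)
    nlinarith [hxy, Real.exp_pos η, sq_nonneg (Real.exp η - 1)]
  rw [Fintype.sum_bool, habs_t, habs_f]
  rw [Finset.sum_filter, Finset.sum_filter, Fintype.sum_bool, Fintype.sum_bool]
  rw [hlog_t, hlog_f]
  rw [if_pos le_rfl, if_pos le_rfl, if_neg (by linarith), if_neg (by linarith)]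
  rw [hPa, hQa, hPf, hQf]
  field_simp
  nlinarith [hxy, Real.exp_pos η, sq_nonneg (Real.exp η - 1)]
end

section
/- Let P and Q be mutually absolutely continuous probability measures on a measurable space (A, F), and let i_{P‖Q}(a) = ln(dP/dQ)(a). Then for all η₁, η₂ > 0, the total variation distance satisfies |P−Q| ≥ (1 − exp(−η₁))·P({a : i_{P‖Q}(a) ≥ η₁}) + (exp(η₂) − 1)·P({a : i_{P‖Q}(a) ≤ −η₂}). -/
open MeasureTheory

theorem tv_lower_bound_relative_information_two_params {A : Type*} [MeasurableSpace A]
    (P Q : Measure A) [IsProbabilityMeasure P] [IsProbabilityMeasure Q]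
    (hPQ : P ≪ Q) (hQP : Q ≪ P) :
    ∀ η₁ η₂ : ℝ, 0 < η₁ → 0 < η₂ →
      tvDist P Q ≥
        (1 - Real.exp (-η₁)) * (P {a | η₁ ≤ Real.log ((P.rnDeriv Q a).toReal)}).toReal +
          (Real.exp η₂ - 1) * (P {a | Real.log ((P.rnDeriv Q a).toReal) ≤ -η₂}).toReal := by
  intro η₁ η₂ hη₁ hη₂
  set E₁ : Set A := {a | η₁ ≤ Real.log ((P.rnDeriv Q a).toReal)} with hE₁def
  set E₂ : Set A := {a | Real.log ((P.rnDeriv Q a).toReal) ≤ -η₂} with hE₂def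
  have hmeas : Measurable fun a => Real.log ((P.rnDeriv Q a).toReal) :=
    Real.measurable_log.comp (P.measurable_rnDeriv Q).ennreal_toReal
  have hE₁ : MeasurableSet E₁ := measurableSet_le measurable_const hmeas
  have hE₂ : MeasurableSet E₂ := measurableSet_le hmeas measurable_const
  -- key measure inequalities in ℝ≥0∞
  have key1 : ENNReal.ofReal (Real.exp η₁) * Q E₁ ≤ P E₁ := by
    have hP : P E₁ = ∫⁻ a in E₁, P.rnDeriv Q a ∂Q := (Measure.setLIntegral_rnDeriv hPQ E₁).symm
    rw [hP]
    calc ENNReal.ofReal (Real.exp η₁) * Q E₁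
        = ∫⁻ _ in E₁, ENNReal.ofReal (Real.exp η₁) ∂Q := by
          rw [setLIntegral_const]
      _ ≤ ∫⁻ a in E₁, P.rnDeriv Q a ∂Q := by
          refine setLIntegral_mono (P.measurable_rnDeriv Q) fun a ha => ?_
          have ha' : η₁ ≤ Real.log ((P.rnDeriv Q a).toReal) := ha
          by_cases htop : P.rnDeriv Q a = ⊤
          · simp [htop]
          have hpos : 0 < (P.rnDeriv Q a).toReal := by
            rcases lt_or_eq_of_le (ENNReal.toReal_nonneg (a := P.rnDeriv Q a)) with h | h
            · exact h
            · exfalso; rw [← h] at ha'; simp [Real.log_zero] at ha'; linarith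
          have : Real.exp η₁ ≤ (P.rnDeriv Q a).toReal := by
            calc Real.exp η₁ ≤ Real.exp (Real.log ((P.rnDeriv Q a).toReal)) :=
                  Real.exp_le_exp.mpr ha'
              _ = (P.rnDeriv Q a).toReal := Real.exp_log hpos
          rw [← ENNReal.ofReal_toReal htop]
          exact ENNReal.ofReal_le_ofReal this
  have key2 : P E₂ ≤ ENNReal.ofReal (Real.exp (-η₂)) * Q E₂ := by
    have hP : P E₂ = ∫⁻ a in E₂, P.rnDeriv Q a ∂Q := (Measure.setLIntegral_rnDeriv hPQ E₂).symm
    rw [hP]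
    calc ∫⁻ a in E₂, P.rnDeriv Q a ∂Q
        ≤ ∫⁻ _ in E₂, ENNReal.ofReal (Real.exp (-η₂)) ∂Q := by
          refine setLIntegral_mono_ae aemeasurable_const ?_
          filter_upwards [Measure.rnDeriv_lt_top P Q] with a hlt ha
          have ha' : Real.log ((P.rnDeriv Q a).toReal) ≤ -η₂ := ha
          have hle : (P.rnDeriv Q a).toReal ≤ Real.exp (-η₂) := by
            rcases lt_or_eq_of_le (ENNReal.toReal_nonneg (a := P.rnDeriv Q a)) with h | h
            · calc (P.rnDeriv Q a).toReal = Real.exp (Real.log ((P.rnDeriv Q a).toReal)) :=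
                    (Real.exp_log h).symm
                _ ≤ Real.exp (-η₂) := Real.exp_le_exp.mpr ha'
            · rw [← h]; exact le_of_lt (Real.exp_pos _)
          rw [← ENNReal.ofReal_toReal hlt.ne]
          exact ENNReal.ofReal_le_ofReal hle
      _ = ENNReal.ofReal (Real.exp (-η₂)) * Q E₂ := setLIntegral_const _ _
  -- pass to real numbers
  have hPfin : ∀ s : Set A, P s ≠ ⊤ := fun s => (measure_lt_top P s).ne
  have hQfin : ∀ s : Set A, Q s ≠ ⊤ := fun s => (measure_lt_top Q s).ne
  set p1 := (P E₁).toReal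
  set q1 := (Q E₁).toReal
  set p2 := (P E₂).toReal
  set q2 := (Q E₂).toReal
  have hk1 : Real.exp η₁ * q1 ≤ p1 := by
    have := ENNReal.toReal_mono (hPfin E₁) key1
    rwa [ENNReal.toReal_mul, ENNReal.toReal_ofReal (Real.exp_pos _).le] at this
  have hk2 : p2 ≤ Real.exp (-η₂) * q2 := by
    have := ENNReal.toReal_mono (by
      exact ENNReal.mul_ne_top ENNReal.ofReal_ne_top (hQfin E₂)) key2
    rwa [ENNReal.toReal_mul, ENNReal.toReal_ofReal (Real.exp_pos _).le] at this
  -- supremum bounds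
  set f : {E : Set A // MeasurableSet E} → ℝ :=
    fun E => |(P E.1).toReal - (Q E.1).toReal| with hf
  have hbdd : BddAbove (Set.range f) := by
    refine ⟨1, ?_⟩
    rintro x ⟨E, rfl⟩
    have h1 : (P E.1).toReal ≤ 1 := by
      have := prob_le_one (μ := P) (s := E.1)
      simpa using ENNReal.toReal_mono (by simp) this
    have h2 : (Q E.1).toReal ≤ 1 := by
      have := prob_le_one (μ := Q) (s := E.1)
      simpa using ENNReal.toReal_mono (by simp) this
    have h3 : 0 ≤ (P E.1).toReal := ENNReal.toReal_nonneg
    have h4 : 0 ≤ (Q E.1).toReal := ENNReal.toReal_nonneg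
    simp only [hf]
    rw [abs_le]
    constructor <;> linarith
  have hs1 : (1 - Real.exp (-η₁)) * p1 ≤ ⨆ E, f E := by
    refine le_trans ?_ (le_ciSup hbdd ⟨E₁, hE₁⟩)
    have hq1 : q1 ≤ Real.exp (-η₁) * p1 := by
      have h := hk1
      have he : Real.exp (-η₁) * (Real.exp η₁ * q1) ≤ Real.exp (-η₁) * p1 :=
        mul_le_mul_of_nonneg_left h (Real.exp_pos _).le
      rwa [← mul_assoc, ← Real.exp_add, neg_add_cancel, Real.exp_zero, one_mul] at he
    have : (1 - Real.exp (-η₁)) * p1 ≤ p1 - q1 := by nlinarith [ENNReal.toReal_nonneg (a := P E₁)]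
    exact le_trans this (le_abs_self _)
  have hs2 : (Real.exp η₂ - 1) * p2 ≤ ⨆ E, f E := by
    refine le_trans ?_ (le_ciSup hbdd ⟨E₂, hE₂⟩)
    have hq2 : Real.exp η₂ * p2 ≤ q2 := by
      have he : Real.exp η₂ * p2 ≤ Real.exp η₂ * (Real.exp (-η₂) * q2) :=
        mul_le_mul_of_nonneg_left hk2 (Real.exp_pos _).le
      rwa [← mul_assoc, ← Real.exp_add, add_neg_cancel, Real.exp_zero, one_mul] at he
    have : (Real.exp η₂ - 1) * p2 ≤ q2 - p2 := by nlinarith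
    exact le_trans this (le_trans (le_abs_self _) (by rw [abs_sub_comm]))
  have : tvDist P Q = 2 * ⨆ E, f E := rfl
  rw [this]
  linarith
end

section
/- Fix η₁, η₂ > 0 and let P and Q be the probability measures on the two-element set A = {a, b} defined by P(a) = (exp(η₁) − exp(η₁−η₂))/(exp(η₁) − exp(−η₂)), Q(a) = (1 − exp(−η₂))/(exp(η₁) − exp(−η₂)), P(b) = 1 − P(a), Q(b) = 1 − Q(a). Then the two-parameter lower bound is attained with equality: |P−Q| = (1 − exp(−η₁))·P({x : i_{P‖Q}(x) ≥ η₁}) + (exp(η₂) − 1)·P({x : i_{P‖Q}(x) ≤ −η₂}), where i_{P‖Q}(x) = ln(P(x)/Q(x)) and |P−Q| = |P(a)−Q(a)| + |P(b)−Q(b)|. -/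
open scoped Classical

theorem tv_two_param_lower_bound_attained (η₁ η₂ : ℝ) (hη₁ : 0 < η₁) (hη₂ : 0 < η₂)
    (P Q : Bool → ℝ)
    (hPa : P true = (Real.exp η₁ - Real.exp (η₁ - η₂)) / (Real.exp η₁ - Real.exp (-η₂)))
    (hQa : Q true = (1 - Real.exp (-η₂)) / (Real.exp η₁ - Real.exp (-η₂)))
    (hPb : P false = 1 - P true)
    (hQb : Q false = 1 - Q true) :
    ∑ x, |P x - Q x| =
      (1 - Real.exp (-η₁)) *
          (∑ x ∈ Finset.univ.filter (fun x => η₁ ≤ Real.log (P x / Q x)), P x) +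
        (Real.exp η₂ - 1) *
          (∑ x ∈ Finset.univ.filter (fun x => Real.log (P x / Q x) ≤ -η₂), P x) := by
  have he1 : (1 : ℝ) < Real.exp η₁ := Real.one_lt_exp_iff.mpr hη₁
  have he2 : Real.exp (-η₂) < 1 := Real.exp_lt_one_iff.mpr (by linarith)
  have hD : 0 < Real.exp η₁ - Real.exp (-η₂) := by linarith
  have hQt : 0 < Q true := by
    rw [hQa]; exact div_pos (by linarith) hD
  have hQf : 0 < Q false := by
    rw [hQb, hQa]
    rw [lt_sub_iff_add_lt, zero_add, div_lt_one hD]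
    linarith
  have hPt : P true = Real.exp η₁ * Q true := by
    rw [hPa, hQa, Real.exp_sub, Real.exp_neg]
    field_simp [hD.ne']
  have hPf : P false = Real.exp (-η₂) * Q false := by
    have key : P false = (Real.exp (η₁ - η₂) - Real.exp (-η₂)) /
        (Real.exp η₁ - Real.exp (-η₂)) := by
      rw [hPb, hPa, eq_div_iff hD.ne', sub_mul, div_mul_cancel₀ _ hD.ne']; ring
    have key2 : Q false = (Real.exp η₁ - 1) / (Real.exp η₁ - Real.exp (-η₂)) := by
      rw [hQb, hQa, eq_div_iff hD.ne', sub_mul, div_mul_cancel₀ _ hD.ne']; ring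
    have hsplit : Real.exp (η₁ - η₂) = Real.exp (-η₂) * Real.exp η₁ := by
      rw [← Real.exp_add]; ring_nf
    rw [key, key2, mul_div_assoc', hsplit]
    congr 1
    ring
  have hlogt : Real.log (P true / Q true) = η₁ := by
    rw [hPt, mul_div_assoc, div_self hQt.ne', mul_one, Real.log_exp]
  have hlogf : Real.log (P false / Q false) = -η₂ := by
    rw [hPf, mul_div_assoc, div_self hQf.ne', mul_one, Real.log_exp]
  have hsum1 : (∑ x ∈ Finset.univ.filter (fun x => η₁ ≤ Real.log (P x / Q x)), P x)
      = P true := by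
    rw [Finset.sum_filter, Fintype.sum_bool, hlogt, hlogf,
      if_pos le_rfl, if_neg (by linarith), add_zero]
  have hsum2 : (∑ x ∈ Finset.univ.filter (fun x => Real.log (P x / Q x) ≤ -η₂), P x)
      = P false := by
    rw [Finset.sum_filter, Fintype.sum_bool, hlogt, hlogf,
      if_neg (by linarith), if_pos le_rfl, zero_add]
  rw [hsum1, hsum2, Fintype.sum_bool]
  have habs1 : |P true - Q true| = P true - Q true := by
    rw [abs_of_nonneg]; rw [hPt]; nlinarith
  have habs2 : |P false - Q false| = Q false - P false := by
    rw [abs_of_nonpos]; · ring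
    rw [hPf]; nlinarith
  rw [habs1, habs2, hPt, hPf]
  have h1 : Real.exp (-η₁) * Real.exp η₁ = 1 := by
    rw [← Real.exp_add]; simp
  have h2 : Real.exp η₂ * Real.exp (-η₂) = 1 := by
    rw [← Real.exp_add]; simp
  nlinarith [hQt, hQf]
end

section
/- Let P and Q be probability mass functions on a common finite nonempty set A, with Q strictly positive on A. Let Q_min = min_{a ∈ A} Q(a) and β₂ = min_{a ∈ A} P(a)/Q(a). Then the relative entropy (in nats) satisfies D(P‖Q) ≤ ln(1 + |P−Q|²/(2·Q_min)) − (β₂/2)·|P−Q|², where |P−Q| = Σ_{a ∈ A} |P(a) − Q(a)|. -/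
/-!
With `β = min P/Q`, split `D(P‖Q) = ∑ (P - βQ) log (P/Q) + β ∑ Q log (P/Q)`. The weights
`P - βQ` are nonnegative with total `1 - β`, so Jensen's inequality for `log`, padded with the
point `1` of weight `β`, bounds the first sum by `log ∑ P²/Q = log (1 + χ²(P‖Q))`; and
`χ²(P‖Q) ≤ |P - Q|² / (2 Q_min)` because each `|P a - Q a|` is at most `|P - Q| / 2`.
The second sum is `-β D(Q‖P) ≤ -β |P - Q|² / 2` by Pinsker's inequality, which follows
termwise from `log t ≤ (t - 1)(t + 5) / (2 (2t + 1))` and the Cauchy–Schwarz inequality in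
Engel form.
-/

open Real Set Finset

lemma log_le_sub_one_mul_add_five_div {t : ℝ} (ht : 0 < t) :
    log t ≤ (t - 1) * (t + 5) / (2 * (2 * t + 1)) := by
  set F : ℝ → ℝ := fun x ↦ (x - 1) * (x + 5) / (2 * (2 * x + 1)) - log x
  have hF : ∀ x, 0 < x → HasDerivAt F ((x - 1) ^ 3 / (x * (2 * x + 1) ^ 2)) x := by
    intro x hx
    have hnum : HasDerivAt (fun x : ℝ ↦ (x - 1) * (x + 5)) (2 * x + 4) x := by
      refine (((hasDerivAt_id x).sub_const 1).mul ((hasDerivAt_id x).add_const 5)).congr_deriv ?_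
      simp only [id]; ring
    have hden : HasDerivAt (fun x : ℝ ↦ 2 * (2 * x + 1)) 4 x := by
      refine ((((hasDerivAt_id x).const_mul 2).add_const 1).const_mul 2).congr_deriv ?_; ring
    refine ((hnum.div hden (by positivity)).sub (hasDerivAt_log hx.ne')).congr_deriv ?_
    field_simp
    ring
  have hcont : ContinuousOn F (Ioi 0) := fun x hx ↦ (hF x hx).continuousAt.continuousWithinAt
  have hF1 : F 1 = 0 := by norm_num [F]
  suffices 0 ≤ F t by simpa [F] using this
  rcases le_or_gt 1 t with h1t | ht1
  · have hmono : MonotoneOn F (Icc 1 t) := by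
      refine monotoneOn_of_hasDerivWithinAt_nonneg (convex_Icc 1 t)
        (hcont.mono fun x hx ↦ lt_of_lt_of_le one_pos hx.1)
        (fun x hx ↦ (hF x ?_).hasDerivWithinAt) fun x hx ↦ ?_
      all_goals rw [interior_Icc] at hx
      · linarith [hx.1]
      · have : 0 ≤ x - 1 := by linarith [hx.1]
        have : 0 < x := by linarith [hx.1]
        positivity
    simpa [hF1] using hmono ⟨le_rfl, h1t⟩ ⟨h1t, le_rfl⟩ h1t
  · have hanti : AntitoneOn F (Icc t 1) := by
      refine antitoneOn_of_hasDerivWithinAt_nonpos (convex_Icc t 1)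
        (hcont.mono fun x hx ↦ lt_of_lt_of_le ht hx.1)
        (fun x hx ↦ (hF x ?_).hasDerivWithinAt) fun x hx ↦ ?_
      all_goals rw [interior_Icc] at hx
      · linarith [hx.1]
      · have : 0 < x := by linarith [hx.1]
        have : (x - 1) ^ 3 ≤ 0 := Odd.pow_nonpos (by decide) (by linarith [hx.2])
        exact div_nonpos_of_nonpos_of_nonneg this (by positivity)
    simpa [hF1] using hanti ⟨le_rfl, ht1.le⟩ ⟨ht1.le, le_rfl⟩ ht1.le

lemma sub_add_sq_div_le_mul_log_div {p q : ℝ} (hp : 0 ≤ p) (hq : 0 < q) :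
    p - q + 3 / 2 * (p - q) ^ 2 / (p + 2 * q) ≤ p * log (p / q) := by
  rcases hp.eq_or_lt with rfl | hp
  · have : (0 - q) ^ 2 / (0 + 2 * q) = q / 2 := by field_simp; ring
    rw [mul_div_assoc, this, zero_mul]
    linarith
  have h := log_le_sub_one_mul_add_five_div (div_pos hq hp)
  rw [show log (p / q) = -log (q / p) by rw [← log_inv, inv_div]]
  calc p - q + 3 / 2 * (p - q) ^ 2 / (p + 2 * q)
      = p * -((q / p - 1) * (q / p + 5) / (2 * (2 * (q / p) + 1))) := by
        field_simp
        ring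
    _ ≤ p * -log (q / p) := by gcongr

theorem pinsker {ι : Type*} (s : Finset ι) {p q : ι → ℝ} (hp : ∀ i ∈ s, 0 ≤ p i)
    (hq : ∀ i ∈ s, 0 < q i) (hp1 : ∑ i ∈ s, p i = 1) (hq1 : ∑ i ∈ s, q i = 1) :
    (∑ i ∈ s, |p i - q i|) ^ 2 / 2 ≤ ∑ i ∈ s, p i * log (p i / q i) := by
  have hpos : ∀ i ∈ s, 0 < p i + 2 * q i := fun i hi ↦ by linarith [hp i hi, hq i hi]
  have hsum : ∑ i ∈ s, (p i + 2 * q i) = 3 := by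
    rw [sum_add_distrib, ← mul_sum, hp1, hq1]; norm_num
  have titu := sq_sum_div_le_sum_sq_div s (fun i ↦ |p i - q i|) hpos
  simp only [hsum, sq_abs] at titu
  have hlin : ∑ i ∈ s, (p i - q i + 3 / 2 * (p i - q i) ^ 2 / (p i + 2 * q i))
      = 3 / 2 * ∑ i ∈ s, (p i - q i) ^ 2 / (p i + 2 * q i) := by
    rw [sum_add_distrib, sum_sub_distrib, hp1, hq1, mul_sum]
    simp only [mul_div_assoc]
    ring
  calc (∑ i ∈ s, |p i - q i|) ^ 2 / 2
      ≤ 3 / 2 * ∑ i ∈ s, (p i - q i) ^ 2 / (p i + 2 * q i) := by linarith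
    _ = _ := hlin.symm
    _ ≤ _ := sum_le_sum fun i hi ↦ sub_add_sq_div_le_mul_log_div (hp i hi) (hq i hi)

lemma sum_mul_log_div_le_neg_sq_div_two {ι : Type*} (s : Finset ι) {p q : ι → ℝ}
    (hp : ∀ i ∈ s, 0 < p i) (hq : ∀ i ∈ s, 0 ≤ q i) (hp1 : ∑ i ∈ s, p i = 1)
    (hq1 : ∑ i ∈ s, q i = 1) :
    ∑ i ∈ s, q i * log (p i / q i) ≤ -((∑ i ∈ s, |p i - q i|) ^ 2 / 2) := by
  have := pinsker s hq hp hq1 hp1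
  simp only [abs_sub_comm (q _), ← inv_div (p _), log_inv, mul_neg, sum_neg_distrib] at this ⊢
  linarith

lemma add_sum_mul_log_le_log {ι : Type*} (s : Finset ι) {v : ℝ} {w r : ι → ℝ}
    (hv : 0 ≤ v) (hw : ∀ i ∈ s, 0 ≤ w i) (hvw : v + ∑ i ∈ s, w i = 1)
    (hr : ∀ i ∈ s, w i ≠ 0 → 0 < r i) :
    ∑ i ∈ s, w i * log (r i) ≤ log (v + ∑ i ∈ s, w i * r i) := by
  classical
  set t := s.filter fun i ↦ w i ≠ 0
  have hrestrict : ∀ f : ι → ℝ, ∑ i ∈ t, w i * f i = ∑ i ∈ s, w i * f i := fun f ↦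
    sum_filter_of_ne fun i _ h ↦ left_ne_zero_of_mul h
  have hjensen := strictConcaveOn_log_Ioi.concaveOn.map_add_sum_le (t := t) (p := r)
    (fun i hi ↦ hw i (mem_filter.1 hi).1) (by rwa [sum_filter_of_ne fun i _ h ↦ h])
    (fun i hi ↦ hr i (mem_filter.1 hi).1 (mem_filter.1 hi).2) hv (mem_Ioi.2 one_pos)
  simpa only [smul_eq_mul, log_one, mul_zero, mul_one, zero_add, hrestrict] using hjensen

lemma sum_sub_mul_log_div_le_log_one_add {ι : Type*} (s : Finset ι) {p q : ι → ℝ} {β : ℝ}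
    (hβ : 0 ≤ β) (hβq : ∀ i ∈ s, β * q i ≤ p i) (hq : ∀ i ∈ s, 0 < q i)
    (hp1 : ∑ i ∈ s, p i = 1) (hq1 : ∑ i ∈ s, q i = 1) :
    ∑ i ∈ s, (p i - β * q i) * log (p i / q i) ≤
      log (1 + ∑ i ∈ s, (p i - q i) ^ 2 / q i) := by
  have hpos : ∀ i ∈ s, p i - β * q i ≠ 0 → 0 < p i / q i := fun i hi hne ↦
    div_pos (by linarith [(hβq i hi).lt_of_ne' (sub_ne_zero.1 hne), mul_nonneg hβ (hq i hi).le])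
      (hq i hi)
  have hmean : β + ∑ i ∈ s, (p i - β * q i) * (p i / q i)
      = 1 + ∑ i ∈ s, (p i - q i) ^ 2 / q i := by
    have hterm : ∀ i ∈ s, (p i - β * q i) * (p i / q i)
        = (p i - q i) ^ 2 / q i + (2 * p i - q i) - β * p i := fun i hi ↦ by
      field_simp [(hq i hi).ne']
      ring
    rw [sum_congr rfl hterm, sum_sub_distrib, sum_add_distrib, sum_sub_distrib, ← mul_sum,
      ← mul_sum, hp1, hq1]
    ring
  rw [← hmean]
  exact add_sum_mul_log_le_log s hβ (fun i hi ↦ sub_nonneg.2 (hβq i hi))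
    (by rw [sum_sub_distrib, ← mul_sum, hp1, hq1]; ring) hpos

lemma two_mul_abs_le_sum_abs_of_sum_eq_zero {ι : Type*} [DecidableEq ι] {s : Finset ι}
    {f : ι → ℝ} (hf : ∑ i ∈ s, f i = 0) {a : ι} (ha : a ∈ s) :
    2 * |f a| ≤ ∑ i ∈ s, |f i| := by
  rw [← add_sum_erase s _ ha] at hf ⊢
  have : |f a| ≤ ∑ i ∈ s.erase a, |f i| := by
    rw [← abs_neg, show -f a = ∑ i ∈ s.erase a, f i by linarith]
    exact abs_sum_le_sum_abs _ _
  linarith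

lemma sum_sq_div_le_sq_sum_abs_div {ι : Type*} {s : Finset ι} {f q : ι → ℝ} {m : ℝ}
    (hf : ∑ i ∈ s, f i = 0) (hm : 0 < m) (hq : ∀ i ∈ s, m ≤ q i) :
    ∑ i ∈ s, f i ^ 2 / q i ≤ (∑ i ∈ s, |f i|) ^ 2 / (2 * m) := by
  classical
  calc ∑ i ∈ s, f i ^ 2 / q i
      ≤ ∑ i ∈ s, |f i| * ((∑ j ∈ s, |f j|) / 2) / m := by
        refine sum_le_sum fun i hi ↦ div_le_div₀ (by positivity) ?_ hm (hq i hi)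
        rw [← sq_abs, sq]
        have := two_mul_abs_le_sum_abs_of_sum_eq_zero hf hi
        gcongr
        linarith
    _ = (∑ i ∈ s, |f i|) ^ 2 / (2 * m) := by
        rw [← sum_div, ← sum_mul]
        ring

theorem reverse_pinsker_finite {A : Type*} [Fintype A] [Nonempty A]
    (P Q : A → ℝ) (hP : ∀ a, 0 ≤ P a) (hPsum : ∑ a, P a = 1)
    (hQ : ∀ a, 0 < Q a) (hQsum : ∑ a, Q a = 1) :
    ∑ a, P a * Real.log (P a / Q a) ≤
      Real.log (1 + (∑ a, |P a - Q a|) ^ 2 / (2 * ⨅ a, Q a)) -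
        ((⨅ a, P a / Q a) / 2) * (∑ a, |P a - Q a|) ^ 2 := by
  set β := ⨅ a, P a / Q a
  set m := ⨅ a, Q a
  set V := ∑ a, |P a - Q a|
  have hβ : 0 ≤ β := le_ciInf fun a ↦ div_nonneg (hP a) (hQ a).le
  have hβQ : ∀ a, β * Q a ≤ P a := fun a ↦
    (le_div_iff₀ (hQ a)).1 (ciInf_le (Finite.bddBelow_range _) a)
  have hm : 0 < m := by
    obtain ⟨a, ha⟩ := exists_eq_ciInf_of_finite (f := Q)
    exact (hQ a).trans_eq ha
  have hmix : ∑ a, (P a - β * Q a) * log (P a / Q a) ≤ log (1 + V ^ 2 / (2 * m)) := by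
    refine (sum_sub_mul_log_div_le_log_one_add univ hβ (fun a _ ↦ hβQ a) (fun a _ ↦ hQ a)
      hPsum hQsum).trans (log_le_log ?_ ?_)
    · exact add_pos_of_pos_of_nonneg one_pos
        (sum_nonneg fun a _ ↦ div_nonneg (sq_nonneg _) (hQ a).le)
    gcongr
    exact sum_sq_div_le_sq_sum_abs_div (by rw [sum_sub_distrib, hPsum, hQsum, sub_self]) hm
      fun a _ ↦ ciInf_le (Finite.bddBelow_range _) a
  have hpinsker : β * ∑ a, Q a * log (P a / Q a) ≤ β * -(V ^ 2 / 2) := by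
    rcases hβ.eq_or_lt with hβ0 | hβ0
    · simp [← hβ0]
    exact mul_le_mul_of_nonneg_left (sum_mul_log_div_le_neg_sq_div_two univ
      (fun a _ ↦ (mul_pos hβ0 (hQ a)).trans_le (hβQ a)) (fun a _ ↦ (hQ a).le) hPsum hQsum) hβ
  have hsplit : ∑ a, P a * log (P a / Q a)
      = ∑ a, (P a - β * Q a) * log (P a / Q a) + β * ∑ a, Q a * log (P a / Q a) := by
    rw [mul_sum, ← sum_add_distrib]
    exact sum_congr rfl fun a _ ↦ by ring
  linarith
end

section
/- Let P and Q be probability mass functions on a common finite nonempty set A, with Q strictly positive on A, and let Q_min = min_{a ∈ A} Q(a). Then the relative entropy (in nats) satisfies D(P‖Q) ≤ ln(1 + |P−Q|²/(2·Q_min)), where |P−Q| = Σ_{a ∈ A} |P(a) − Q(a)|. -/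
open Finset Real

theorem reverse_pinsker_finite_weak {A : Type*} [Fintype A] [Nonempty A]
    (P Q : A → ℝ) (hP : ∀ a, 0 ≤ P a) (hPsum : ∑ a, P a = 1)
    (hQ : ∀ a, 0 < Q a) (hQsum : ∑ a, Q a = 1) :
    ∑ a, P a * Real.log (P a / Q a) ≤
      Real.log (1 + (∑ a, |P a - Q a|) ^ 2 / (2 * ⨅ a, Q a)) := by
  classical
  obtain ⟨a0, -, ha0⟩ := Finset.exists_min_image Finset.univ Q
    ⟨Classical.arbitrary A, Finset.mem_univ _⟩
  have hQmin : (⨅ a, Q a) = Q a0 :=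
    le_antisymm (ciInf_le (Finite.bddBelow_range Q) a0)
      (le_ciInf fun a => ha0 a (mem_univ a))
  set m := ⨅ a, Q a with hm
  have hmpos : 0 < m := hQmin ▸ hQ a0
  set V := ∑ a, |P a - Q a| with hVdef
  have hVnn : 0 ≤ V := Finset.sum_nonneg fun a _ => abs_nonneg _
  have hsum0 : ∑ a, (P a - Q a) = 0 := by
    rw [Finset.sum_sub_distrib, hPsum, hQsum]; ring
  have habs : ∀ a, |P a - Q a| ≤ V / 2 := by
    intro a
    have h1 : P a - Q a + ∑ b ∈ univ.erase a, (P b - Q b) = 0 := by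
      have := Finset.add_sum_erase univ (fun b => P b - Q b) (mem_univ a)
      linarith [hsum0, this]
    have h2 : |P a - Q a| ≤ ∑ b ∈ univ.erase a, |P b - Q b| := by
      have h : P a - Q a = -∑ b ∈ univ.erase a, (P b - Q b) := by linarith
      rw [h, abs_neg]
      exact Finset.abs_sum_le_sum_abs _ _
    have h3 : V = |P a - Q a| + ∑ b ∈ univ.erase a, |P b - Q b| := by
      have := Finset.add_sum_erase univ (fun b => |P b - Q b|) (mem_univ a)
      linarith [this]
    linarith
  have hchi : ∑ a, (P a - Q a) ^ 2 / Q a ≤ V ^ 2 / (2 * m) := by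
    have step1 : ∑ a, (P a - Q a) ^ 2 / Q a ≤ (∑ a, (P a - Q a) ^ 2) / m := by
      rw [Finset.sum_div]
      refine Finset.sum_le_sum fun a _ => ?_
      exact div_le_div_of_nonneg_left (sq_nonneg _) hmpos (hQmin ▸ ha0 a (mem_univ a))
    have step2 : ∑ a, (P a - Q a) ^ 2 ≤ V ^ 2 / 2 := by
      have h : ∑ a, (P a - Q a) ^ 2 ≤ ∑ a, (V / 2) * |P a - Q a| := by
        refine Finset.sum_le_sum fun a _ => ?_
        have h1 := mul_le_mul_of_nonneg_right (habs a) (abs_nonneg (P a - Q a))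
        nlinarith [abs_mul_abs_self (P a - Q a)]
      rw [← Finset.mul_sum] at h
      calc ∑ a, (P a - Q a) ^ 2 ≤ V / 2 * V := h
        _ = V ^ 2 / 2 := by ring
    calc ∑ a, (P a - Q a) ^ 2 / Q a ≤ (∑ a, (P a - Q a) ^ 2) / m := step1
      _ ≤ (V ^ 2 / 2) / m := by
          exact div_le_div_of_nonneg_right step2 hmpos.le
      _ = V ^ 2 / (2 * m) := by ring
  have hchinn : 0 ≤ ∑ a, (P a - Q a) ^ 2 / Q a :=
    Finset.sum_nonneg fun a _ => div_nonneg (sq_nonneg _) (hQ a).le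
  have hiden : ∑ a, P a ^ 2 / Q a = 1 + ∑ a, (P a - Q a) ^ 2 / Q a := by
    have h : ∀ a : A, P a ^ 2 / Q a = (P a - Q a) ^ 2 / Q a + 2 * P a - Q a := by
      intro a
      have hq := (hQ a).ne'
      field_simp
      ring
    rw [Finset.sum_congr rfl fun a _ => h a]
    rw [Finset.sum_sub_distrib, Finset.sum_add_distrib, ← Finset.mul_sum, hPsum, hQsum]
    ring
  -- Jensen
  set S := univ.filter (fun a => 0 < P a) with hSdef
  have hSsum : ∑ a ∈ S, P a = 1 := by
    rw [hSdef, Finset.sum_filter_of_ne, hPsum]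
    intro x _ hx
    exact (hP x).lt_of_ne (Ne.symm hx)
  have hjensen : ∑ a ∈ S, P a * Real.log (P a / Q a) ≤
      Real.log (∑ a ∈ S, P a * (P a / Q a)) := by
    have := (strictConcaveOn_log_Ioi.concaveOn).le_map_sum
      (t := S) (w := P) (p := fun a => P a / Q a)
      (fun i _ => hP i) hSsum
      (fun i hi => by
        have hPi : 0 < P i := (Finset.mem_filter.mp hi).2
        exact Set.mem_Ioi.mpr (div_pos hPi (hQ i)))
    simpa [smul_eq_mul] using this
  have hLHS : ∑ a, P a * Real.log (P a / Q a) = ∑ a ∈ S, P a * Real.log (P a / Q a) := by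
    rw [hSdef, Finset.sum_filter_of_ne]
    intro x _ hx
    refine (hP x).lt_of_ne fun h0 => hx ?_
    rw [← h0]; ring
  have hRHS : ∑ a ∈ S, P a * (P a / Q a) ≤ ∑ a, P a ^ 2 / Q a := by
    have h : ∀ a : A, P a * (P a / Q a) = P a ^ 2 / Q a := fun a => by ring
    rw [Finset.sum_congr rfl fun a _ => h a]
    exact Finset.sum_le_sum_of_subset_of_nonneg (Finset.filter_subset _ _)
      (fun a _ _ => div_nonneg (sq_nonneg _) (hQ a).le)
  have hSne : S.Nonempty := by
    rcases Finset.eq_empty_or_nonempty S with h | h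
    · rw [h, Finset.sum_empty] at hSsum; norm_num at hSsum
    · exact h
  have hSpos : 0 < ∑ a ∈ S, P a * (P a / Q a) := by
    refine Finset.sum_pos (fun i hi => ?_) hSne
    have hPi : 0 < P i := (Finset.mem_filter.mp hi).2
    exact mul_pos hPi (div_pos hPi (hQ i))
  calc ∑ a, P a * Real.log (P a / Q a)
      = ∑ a ∈ S, P a * Real.log (P a / Q a) := hLHS
    _ ≤ Real.log (∑ a ∈ S, P a * (P a / Q a)) := hjensen
    _ ≤ Real.log (1 + V ^ 2 / (2 * m)) := by
        apply Real.log_le_log hSpos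
        calc ∑ a ∈ S, P a * (P a / Q a) ≤ ∑ a, P a ^ 2 / Q a := hRHS
          _ = 1 + ∑ a, (P a - Q a) ^ 2 / Q a := hiden
          _ ≤ 1 + V ^ 2 / (2 * m) := by linarith
end

section
/- Let P and Q be probability mass functions on a common finite nonempty set A, with P and Q strictly positive on A. Then (min_{a ∈ A} P(a)/Q(a))·D(Q‖P) ≤ ln(1 + χ²(P,Q)) − D(P‖Q) ≤ (max_{a ∈ A} P(a)/Q(a))·D(Q‖P), where relative entropies are in nats. -/
theorem relEntropy_chiSq_sandwich {A : Type*} [Fintype A] [Nonempty A]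
    (P Q : A → ℝ) (hP : ∀ a, 0 < P a) (hPsum : ∑ a, P a = 1)
    (hQ : ∀ a, 0 < Q a) (hQsum : ∑ a, Q a = 1) :
    (⨅ a, P a / Q a) * ∑ a, Q a * Real.log (Q a / P a) ≤
        Real.log (1 + ∑ a, (P a - Q a) ^ 2 / Q a) - ∑ a, P a * Real.log (P a / Q a) ∧
      Real.log (1 + ∑ a, (P a - Q a) ^ 2 / Q a) - ∑ a, P a * Real.log (P a / Q a) ≤
        (⨆ a, P a / Q a) * ∑ a, Q a * Real.log (Q a / P a) := by
  classical
  obtain ⟨a0, ha0⟩ := Finite.exists_min (fun a => P a / Q a)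
  obtain ⟨a1, ha1⟩ := Finite.exists_max (fun a => P a / Q a)
  have hrpos : ∀ a, 0 < P a / Q a := fun a => div_pos (hP a) (hQ a)
  set m := P a0 / Q a0 with hmdef
  set M := P a1 / Q a1 with hMdef
  have hmpos : 0 < m := hrpos a0
  have hiInf : (⨅ a, P a / Q a) = m :=
    le_antisymm (ciInf_le (Set.Finite.bddBelow (Set.finite_range _)) a0) (le_ciInf ha0)
  have hiSup : (⨆ a, P a / Q a) = M :=
    le_antisymm (ciSup_le ha1) (le_ciSup (f := fun a => P a / Q a) (Set.Finite.bddAbove (Set.finite_range _)) a1)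
  have hQr : ∀ a, Q a * (P a / Q a) = P a := fun a => by
    rw [mul_div_assoc']
    exact mul_div_cancel_left₀ _ (hQ a).ne'
  set S : ℝ := ∑ a, Q a * (P a / Q a) ^ 2 with hSdef
  set D1 : ℝ := ∑ a, P a * Real.log (P a / Q a) with hD1def
  set L : ℝ := ∑ a, Q a * Real.log (P a / Q a) with hLdef
  have hsum1 : ∑ a, Q a * (P a / Q a) = 1 := by
    rw [Finset.sum_congr rfl fun a _ => hQr a]; exact hPsum
  have hSpos : 0 < S := Finset.sum_pos (fun a _ => by
    have h1 := hrpos a; have h2 := hQ a; positivity) Finset.univ_nonempty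
  have hchi : 1 + ∑ a, (P a - Q a) ^ 2 / Q a = S := by
    have pt : ∀ a ∈ Finset.univ, (P a - Q a) ^ 2 / Q a
        = Q a * (P a / Q a) ^ 2 - 2 * (Q a * (P a / Q a)) + Q a := by
      intro a _
      have hq := (hQ a).ne'
      field_simp
      ring
    rw [Finset.sum_congr rfl pt, Finset.sum_add_distrib, Finset.sum_sub_distrib,
      ← Finset.mul_sum, hsum1, hQsum, ← hSdef]
    ring
  have hDQ : ∑ a, Q a * Real.log (Q a / P a) = -L := by
    have pt : ∀ a ∈ Finset.univ, Q a * Real.log (Q a / P a)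
        = -(Q a * Real.log (P a / Q a)) := by
      intro a _
      rw [← inv_div (P a) (Q a), Real.log_inv]
      ring
    rw [Finset.sum_congr rfl pt, Finset.sum_neg_distrib, ← hLdef]
  rw [hchi, hDQ, hiInf, hiSup]
  have hlogS : Real.log S ≤ S - 1 := Real.log_le_sub_one_of_pos hSpos
  have hlogS' : 1 - 1 / S ≤ Real.log S := by
    have h := Real.log_le_sub_one_of_pos (inv_pos.mpr hSpos)
    rw [Real.log_inv] at h
    rw [one_div]
    linarith
  constructor
  · -- lower bound
    have key2 : D1 - m * L ≤ (1 - m) * Real.log S + m - m / S := by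
      have pt : ∀ a ∈ Finset.univ, (Q a * ((P a / Q a) - m)) * Real.log (P a / Q a)
          ≤ (Q a * ((P a / Q a) - m)) * (Real.log S + (P a / Q a) / S - 1) := by
        intro a _
        apply mul_le_mul_of_nonneg_left _ (mul_nonneg (hQ a).le (by linarith [ha0 a]))
        have h := Real.log_le_sub_one_of_pos (div_pos (hrpos a) hSpos)
        rw [Real.log_div (ne_of_gt (hrpos a)) (ne_of_gt hSpos)] at h
        linarith
      have hsum := Finset.sum_le_sum pt
      have eL : ∀ a ∈ Finset.univ, (Q a * ((P a / Q a) - m)) * Real.log (P a / Q a)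
          = P a * Real.log (P a / Q a) - m * (Q a * Real.log (P a / Q a)) := by
        intro a _; linear_combination Real.log (P a / Q a) * hQr a
      have eR : ∀ a ∈ Finset.univ, (Q a * ((P a / Q a) - m)) * (Real.log S + (P a / Q a) / S - 1)
          = ((Q a * (P a / Q a)) * Real.log S - m * (Q a * Real.log S)
            + ((Q a * (P a / Q a) ^ 2) / S - m * ((Q a * (P a / Q a)) / S))
            - (Q a * (P a / Q a)) + m * Q a) := by
        intro a _; ring
      rw [Finset.sum_congr rfl eL, Finset.sum_congr rfl eR] at hsum
      simp only [Finset.sum_add_distrib, Finset.sum_sub_distrib, ← Finset.mul_sum,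
        ← Finset.sum_mul, ← Finset.sum_div] at hsum
      rw [hsum1, hQsum, ← hSdef, ← hD1def, ← hLdef] at hsum
      have hSS : S / S = 1 := div_self (ne_of_gt hSpos)
      rw [hSS] at hsum
      have e : (1 - m) * Real.log S + m - m / S
          = 1 * Real.log S - m * (1 * Real.log S) + (1 - m * (1 / S)) - 1 + m * 1 := by ring
      linarith
    have hm1S : m * (1 - 1 / S) ≤ m * Real.log S :=
      mul_le_mul_of_nonneg_left hlogS' hmpos.le
    have : m * (1 - 1 / S) = m - m / S := by ring
    linarith
  · -- upper bound
    have key1 : S - 1 - D1 + M * L ≤ 0 := by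
      have pt : ∀ a ∈ Finset.univ,
          Q a * (((P a / Q a) - M) * ((P a / Q a) - 1 - Real.log (P a / Q a))) ≤ 0 := by
        intro a _
        have h1 : (P a / Q a) - M ≤ 0 := by linarith [ha1 a]
        have h2 : 0 ≤ (P a / Q a) - 1 - Real.log (P a / Q a) := by
          have := Real.log_le_sub_one_of_pos (hrpos a); linarith
        exact mul_nonpos_of_nonneg_of_nonpos (hQ a).le
          (mul_nonpos_of_nonpos_of_nonneg h1 h2)
      have hsum := Finset.sum_nonpos pt
      have expand : ∀ a ∈ Finset.univ,
          Q a * (((P a / Q a) - M) * ((P a / Q a) - 1 - Real.log (P a / Q a)))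
          = Q a * (P a / Q a) ^ 2 - Q a * (P a / Q a) - P a * Real.log (P a / Q a)
            - M * (Q a * (P a / Q a)) + M * Q a + M * (Q a * Real.log (P a / Q a)) := by
        intro a _
        linear_combination (-Real.log (P a / Q a)) * hQr a
      rw [Finset.sum_congr rfl expand] at hsum
      simp only [Finset.sum_add_distrib, Finset.sum_sub_distrib, ← Finset.mul_sum] at hsum
      rw [hsum1, hQsum, ← hSdef, ← hD1def, ← hLdef] at hsum
      linarith
    linarith
end

section
/- Let P and Q be probability measures on a measurable space (A, F) with P absolutely continuous with respect to Q, and suppose there are constants β₁ ∈ (0,1] and β₂ ∈ [0,1] such that β₂ ≤ dP/dQ(a) ≤ 1/β₁ for Q-almost every a. Then the chi-squared divergence satisfies χ²(P,Q) ≤ max{ 1/β₁ − 1, 1 − β₂ }·|P−Q|, where χ²(P,Q) = ∫_A (dP/dQ − 1)² dQ and |P−Q| is the total variation distance. -/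
open MeasureTheory

/-- Chi-squared divergence: `χ²(P,Q) = ∫ (dP/dQ − 1)² dQ`. -/
noncomputable def chiSqDiv {A : Type*} [MeasurableSpace A] (P Q : Measure A) : ℝ :=
  ∫ a, ((P.rnDeriv Q a).toReal - 1) ^ 2 ∂Q

/-!
Write `g = dP/dQ − 1`. If `|g| ≤ M` almost everywhere then `g² ≤ M |g|`, so
`χ²(P,Q) ≤ M ∫ |g| dQ`. Since `∫ g dQ = P(A) − Q(A) = 0`, the integral of `|g|` is twice the
integral of `g` over `E = {g ≥ 0}`, i.e. `2 (P(E) − Q(E)) ≤ |P − Q|`. The hypothesis on the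
density gives `|g| ≤ max (1/β₁ − 1) (1 − β₂)`.
-/

section

variable {A : Type*} [MeasurableSpace A] {P Q : Measure A}

lemma two_mul_abs_sub_le_tvDist_s12 [IsFiniteMeasure P] [IsFiniteMeasure Q] {s : Set A}
    (hs : MeasurableSet s) : 2 * |(P s).toReal - (Q s).toReal| ≤ tvDist P Q := by
  have hbdd : BddAbove (Set.range fun E : {E : Set A // MeasurableSet E} =>
      |(P E.1).toReal - (Q E.1).toReal|) := by
    refine ⟨(P Set.univ).toReal + (Q Set.univ).toReal, ?_⟩
    rintro x ⟨⟨t, -⟩, rfl⟩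
    refine (abs_sub _ _).trans ?_
    simp only [ENNReal.abs_toReal]
    gcongr <;> simp
  exact mul_le_mul_of_nonneg_left (le_ciSup hbdd ⟨s, hs⟩) zero_le_two

lemma setIntegral_toReal_rnDeriv_sub_one [IsFiniteMeasure P] [IsFiniteMeasure Q] (hPQ : P ≪ Q)
    (s : Set A) : ∫ a in s, ((P.rnDeriv Q a).toReal - 1) ∂Q = (P s).toReal - (Q s).toReal := by
  rw [integral_sub Measure.integrable_toReal_rnDeriv.restrict (integrable_const 1),
    Measure.setIntegral_toReal_rnDeriv hPQ]
  simp [Measure.real]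

lemma integral_abs_toReal_rnDeriv_sub_one_le_tvDist [IsProbabilityMeasure P]
    [IsProbabilityMeasure Q] (hPQ : P ≪ Q) :
    ∫ a, |(P.rnDeriv Q a).toReal - 1| ∂Q ≤ tvDist P Q := by
  set g : A → ℝ := fun a => (P.rnDeriv Q a).toReal - 1
  have hg : Integrable g Q := Measure.integrable_toReal_rnDeriv.sub (integrable_const 1)
  set E : Set A := {a | 0 ≤ g a}
  have hE : MeasurableSet E :=
    measurableSet_le measurable_const ((Measure.measurable_rnDeriv P Q).ennreal_toReal.sub_const 1)
  have hpos : ∫ a in E, |g a| ∂Q = ∫ a in E, g a ∂Q :=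
    setIntegral_congr_fun hE fun a ha => abs_of_nonneg ha
  have hneg : ∫ a in Eᶜ, |g a| ∂Q = -∫ a in Eᶜ, g a ∂Q := by
    rw [← integral_neg]
    exact setIntegral_congr_fun hE.compl fun a ha => abs_of_neg (not_le.mp ha)
  have hmean : ∫ a in E, g a ∂Q + ∫ a in Eᶜ, g a ∂Q = 0 := by
    rw [integral_add_compl hE hg, ← setIntegral_univ, setIntegral_toReal_rnDeriv_sub_one hPQ]
    simp
  calc ∫ a, |g a| ∂Q = 2 * ∫ a in E, g a ∂Q := by
        rw [← integral_add_compl hE hg.abs, hpos, hneg]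
        linarith
    _ = 2 * ((P E).toReal - (Q E).toReal) := by rw [setIntegral_toReal_rnDeriv_sub_one hPQ]
    _ ≤ 2 * |(P E).toReal - (Q E).toReal| := by gcongr; exact le_abs_self _
    _ ≤ tvDist P Q := two_mul_abs_sub_le_tvDist_s12 hE

lemma chiSqDiv_le_mul_integral_abs [IsFiniteMeasure P] [IsFiniteMeasure Q] {M : ℝ}
    (hM : ∀ᵐ a ∂Q, |(P.rnDeriv Q a).toReal - 1| ≤ M) :
    chiSqDiv P Q ≤ M * ∫ a, |(P.rnDeriv Q a).toReal - 1| ∂Q := by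
  set g : A → ℝ := fun a => (P.rnDeriv Q a).toReal - 1
  have hg : Integrable g Q := Measure.integrable_toReal_rnDeriv.sub (integrable_const 1)
  have hsq : ∀ᵐ a ∂Q, g a ^ 2 ≤ M * |g a| := by
    filter_upwards [hM] with a ha
    rw [← sq_abs, sq]
    exact mul_le_mul_of_nonneg_right ha (abs_nonneg _)
  have hg_sq : Integrable (fun a => g a ^ 2) Q := by
    refine (hg.abs.const_mul M).mono' (hg.aestronglyMeasurable.pow 2) ?_
    filter_upwards [hsq] with a ha
    rwa [Real.norm_eq_abs, abs_of_nonneg (sq_nonneg _)]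
  rw [← integral_const_mul]
  exact integral_mono_ae hg_sq (hg.abs.const_mul M) hsq

lemma chiSqDiv_le_mul_tvDist [IsProbabilityMeasure P] [IsProbabilityMeasure Q] (hPQ : P ≪ Q)
    {M : ℝ} (hM : ∀ᵐ a ∂Q, |(P.rnDeriv Q a).toReal - 1| ≤ M) :
    chiSqDiv P Q ≤ M * tvDist P Q := by
  obtain ⟨a, ha⟩ := hM.exists
  have hM0 : 0 ≤ M := (abs_nonneg _).trans ha
  calc chiSqDiv P Q ≤ M * ∫ a, |(P.rnDeriv Q a).toReal - 1| ∂Q := chiSqDiv_le_mul_integral_abs hM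
    _ ≤ M * tvDist P Q := by gcongr; exact integral_abs_toReal_rnDeriv_sub_one_le_tvDist hPQ

end

theorem chiSq_le_tv_general_general {A : Type*} [MeasurableSpace A]
    (P Q : Measure A) [IsProbabilityMeasure P] [IsProbabilityMeasure Q]
    (hPQ : P ≪ Q) (β₁ β₂ : ℝ)
    (hbound : ∀ᵐ a ∂Q, β₂ ≤ ((P.rnDeriv Q) a).toReal ∧ ((P.rnDeriv Q) a).toReal ≤ 1 / β₁) :
    chiSqDiv P Q ≤ max (1 / β₁ - 1) (1 - β₂) * tvDist P Q := by
  refine chiSqDiv_le_mul_tvDist hPQ ?_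
  filter_upwards [hbound] with a ⟨hlower, hupper⟩
  rw [abs_le]
  constructor <;> linarith [le_max_left (1 / β₁ - 1) (1 - β₂), le_max_right (1 / β₁ - 1) (1 - β₂)]

theorem chiSq_le_tv_general {A : Type*} [MeasurableSpace A]
    (P Q : Measure A) [IsProbabilityMeasure P] [IsProbabilityMeasure Q]
    (hPQ : P ≪ Q) (β₁ β₂ : ℝ) (hβ₁ : β₁ ∈ Set.Ioc (0 : ℝ) 1) (hβ₂ : β₂ ∈ Set.Icc (0 : ℝ) 1)
    (hbound : ∀ᵐ a ∂Q, β₂ ≤ ((P.rnDeriv Q) a).toReal ∧ ((P.rnDeriv Q) a).toReal ≤ 1 / β₁) :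
    chiSqDiv P Q ≤ max (1 / β₁ - 1) (1 - β₂) * tvDist P Q :=
  chiSq_le_tv_general_general P Q hPQ β₁ β₂ hbound
end

section
/- Let P and Q be probability mass functions on a common finite nonempty set A, with Q strictly positive on A, and let Q_min = min_{a ∈ A} Q(a). Then the Rényi divergence of order ∞ (in nats) satisfies D_∞(P‖Q) = ln( max_{a ∈ A} P(a)/Q(a) ) ≤ ln(1 + |P−Q|/(2·Q_min)), where |P−Q| = Σ_{a ∈ A} |P(a) − Q(a)|. -/
open Finset

/-- Since the signed deviations sum to zero, the positive ones carry half of the total. -/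
theorem sub_le_half_sum_abs_sub {ι : Type*} [Fintype ι] {f g : ι → ℝ}
    (h : ∑ i, f i = ∑ i, g i) (i : ι) :
    f i - g i ≤ (∑ j, |f j - g j|) / 2 := by
  have hsum : ∑ j, (f j - g j + |f j - g j|) = ∑ j, |f j - g j| := by
    rw [sum_add_distrib, sum_sub_distrib, h, sub_self, zero_add]
  have hterm : f i - g i + |f i - g i| ≤ ∑ j, |f j - g j| :=
    hsum ▸ single_le_sum (f := fun j => f j - g j + |f j - g j|)
      (fun j _ => neg_le_iff_add_nonneg.mp (neg_abs_le _)) (mem_univ i)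
  linarith [le_abs_self (f i - g i)]

theorem div_le_one_add_div_of_sub_le {p q c m : ℝ} (hm : 0 < m) (hmq : m ≤ q) (hc : 0 ≤ c)
    (hpq : p - q ≤ c) : p / q ≤ 1 + c / m := by
  have hq : 0 < q := hm.trans_le hmq
  calc p / q ≤ (q + c) / q := by gcongr; linarith
    _ = 1 + c / q := by rw [add_div, div_self hq.ne']
    _ ≤ 1 + c / m := by gcongr

theorem renyi_infty_le_tv_general {A : Type*} [Fintype A]
    (P Q : A → ℝ) (hPsum : ∑ a, P a = 1)
    (hQ : ∀ a, 0 < Q a) (hQsum : ∑ a, Q a = 1) :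
    Real.log (⨆ a, P a / Q a) ≤
      Real.log (1 + (∑ a, |P a - Q a|) / (2 * ⨅ a, Q a)) := by
  obtain ⟨a₀, -, hPa₀⟩ : ∃ a ∈ univ, (0 : ℝ) < P a :=
    exists_lt_of_sum_lt (by simp [hPsum])
  have : Nonempty A := ⟨a₀⟩
  obtain ⟨b, hb⟩ := exists_eq_ciInf_of_finite (f := Q)
  have hratio : ∀ a, P a / Q a ≤ 1 + (∑ a, |P a - Q a|) / (2 * ⨅ a, Q a) := fun a => by
    rw [← div_div]
    exact div_le_one_add_div_of_sub_le (hb ▸ hQ b) (ciInf_le (Finite.bddBelow_range Q) a)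
      (by positivity) (sub_le_half_sum_abs_sub (hPsum.trans hQsum.symm) a)
  have hsup_pos : 0 < ⨆ a, P a / Q a :=
    (div_pos hPa₀ (hQ a₀)).trans_le (le_ciSup (Finite.bddAbove_range fun a => P a / Q a) a₀)
  exact Real.log_le_log hsup_pos (ciSup_le hratio)

theorem renyi_infty_le_tv {A : Type*} [Fintype A] [Nonempty A]
    (P Q : A → ℝ) (hP : ∀ a, 0 ≤ P a) (hPsum : ∑ a, P a = 1)
    (hQ : ∀ a, 0 < Q a) (hQsum : ∑ a, Q a = 1) :
    Real.log (⨆ a, P a / Q a) ≤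
      Real.log (1 + (∑ a, |P a - Q a|) / (2 * ⨅ a, Q a)) :=
  renyi_infty_le_tv_general P Q hPsum hQ hQsum
end

section
/- Let P and Q be probability mass functions on a common finite nonempty set A, with Q strictly positive on A, let Q_min = min_{a ∈ A} Q(a), and let α ∈ (1,2]. Then the Rényi divergence of order α (in nats) satisfies D_α(P‖Q) ≤ ln(1 + |P−Q|²/(2·Q_min)), where |P−Q| = Σ_{a ∈ A} |P(a) − Q(a)|. -/
theorem renyi_alpha_le_tv_one_two {A : Type*} [Fintype A] [Nonempty A]
    (P Q : A → ℝ) (hP : ∀ a, 0 ≤ P a) (hPsum : ∑ a, P a = 1)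
    (hQ : ∀ a, 0 < Q a) (hQsum : ∑ a, Q a = 1)
    (α : ℝ) (hα : α ∈ Set.Ioc (1 : ℝ) 2) :
    (1 / (α - 1)) * Real.log (∑ a, P a ^ α * Q a ^ (1 - α)) ≤
      Real.log (1 + (∑ a, |P a - Q a|) ^ 2 / (2 * ⨅ a, Q a)) := by
  obtain ⟨hα1, hα2⟩ := hα
  set β := α - 1 with hβ
  have hβ0 : 0 < β := by simp [hβ]; linarith
  have hβ1 : β ≤ 1 := by simp [hβ]; linarith
  -- the infimum
  obtain ⟨a0, ha0⟩ := Finite.exists_min Q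
  have hm_eq : (⨅ a, Q a) = Q a0 :=
    le_antisymm (ciInf_le (Finite.bddBelow_range _) a0) (le_ciInf ha0)
  have hm_pos : 0 < ⨅ a, Q a := hm_eq ▸ hQ a0
  have hm_le : ∀ a, (⨅ a, Q a) ≤ Q a := fun a => hm_eq ▸ ha0 a
  set m := ⨅ a, Q a
  set S := ∑ a, P a ^ 2 / Q a with hS
  -- Step A : Jensen
  have jensen := Real.arith_mean_le_rpow_mean Finset.univ P
      (fun a => (P a / Q a) ^ β) (fun a _ => hP a) hPsum
      (fun a _ => Real.rpow_nonneg (div_nonneg (hP a) (hQ a).le) β)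
      (p := 1 / β) ((one_le_div hβ0).mpr hβ1)
  have hterm : ∀ a, P a * (P a / Q a) ^ β = P a ^ α * Q a ^ (1 - α) := by
    intro a
    rcases eq_or_lt_of_le (hP a) with h | h
    · rw [← h]
      simp [Real.zero_rpow (by linarith : α ≠ 0)]
    · rw [Real.div_rpow (hP a) (hQ a).le,
        show (1 : ℝ) - α = -β by ring, Real.rpow_neg (hQ a).le,
        show α = 1 + β by ring, Real.rpow_add h, Real.rpow_one]
      field_simp
  have hz : ∀ a, P a * ((P a / Q a) ^ β) ^ (1 / β) = P a ^ 2 / Q a := by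
    intro a
    rw [← Real.rpow_mul (div_nonneg (hP a) (hQ a).le),
      mul_one_div_cancel hβ0.ne', Real.rpow_one]
    field_simp
  have hstepA : (∑ a, P a ^ α * Q a ^ (1 - α)) ≤ S ^ β := by
    calc (∑ a, P a ^ α * Q a ^ (1 - α)) = ∑ a, P a * (P a / Q a) ^ β := by
          exact Finset.sum_congr rfl fun a _ => (hterm a).symm
      _ ≤ (∑ a, P a * ((P a / Q a) ^ β) ^ (1 / β)) ^ (1 / (1 / β)) := jensen
      _ = S ^ β := by
          rw [one_div_one_div]
          congr 1
          exact Finset.sum_congr rfl fun a _ => hz a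
  -- Step B : S = 1 + ∑ (P-Q)²/Q
  have hstepB : S = 1 + ∑ a, (P a - Q a) ^ 2 / Q a := by
    have : ∀ a, P a ^ 2 / Q a = (P a - Q a) ^ 2 / Q a + (2 * P a - Q a) := by
      intro a
      have hq := (hQ a).ne'
      field_simp
      ring
    rw [hS, Finset.sum_congr rfl fun a _ => this a, Finset.sum_add_distrib,
      Finset.sum_sub_distrib, ← Finset.mul_sum, hPsum, hQsum]
    ring
  -- Step C : ∑ (P-Q)² ≤ D²/2
  set D := ∑ a, |P a - Q a| with hD
  have hstepC : (∑ a, (P a - Q a) ^ 2) ≤ D ^ 2 / 2 := by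
    set s : Finset A := Finset.univ.filter (fun a => Q a ≤ P a) with hs
    set t : Finset A := Finset.univ.filter (fun a => ¬ Q a ≤ P a) with ht
    have hsplit : ∀ f : A → ℝ, (∑ a, f a) = (∑ a ∈ s, f a) + (∑ a ∈ t, f a) := by
      intro f; rw [hs, ht, Finset.sum_filter_add_sum_filter_not]
    have hzero : (∑ a ∈ s, (P a - Q a)) + (∑ a ∈ t, (P a - Q a)) = 0 := by
      rw [← hsplit, Finset.sum_sub_distrib, hPsum, hQsum]; ring
    set u := ∑ a ∈ s, (P a - Q a) with hu
    have habs_s : ∀ a ∈ s, |P a - Q a| = P a - Q a := by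
      intro a ha; rw [abs_of_nonneg]; rw [hs, Finset.mem_filter] at ha; linarith [ha.2]
    have habs_t : ∀ a ∈ t, |P a - Q a| = -(P a - Q a) := by
      intro a ha; rw [abs_of_nonpos]; rw [ht, Finset.mem_filter] at ha
      push_neg at ha; linarith [ha.2]
    have hDu : D = 2 * u := by
      rw [hD, hsplit (fun a => |P a - Q a|), Finset.sum_congr rfl habs_s,
        Finset.sum_congr rfl habs_t, Finset.sum_neg_distrib]
      rw [hu]; linarith [hzero]
    have hu_nonneg : ∀ a ∈ s, 0 ≤ P a - Q a := fun a ha => by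
      rw [hs, Finset.mem_filter] at ha; linarith [ha.2]
    have hv_nonneg : ∀ a ∈ t, 0 ≤ -(P a - Q a) := fun a ha => by
      rw [ht, Finset.mem_filter] at ha; push_neg at ha; linarith [ha.2]
    have h1 : (∑ a ∈ s, (P a - Q a) ^ 2) ≤ u ^ 2 :=
      Finset.sum_sq_le_sq_sum_of_nonneg hu_nonneg
    have h2 : (∑ a ∈ t, (P a - Q a) ^ 2) ≤ u ^ 2 := by
      have ht' : (∑ a ∈ t, -(P a - Q a)) = u := by
        rw [Finset.sum_neg_distrib]; linarith [hzero]
      calc (∑ a ∈ t, (P a - Q a) ^ 2) = ∑ a ∈ t, (-(P a - Q a)) ^ 2 :=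
            Finset.sum_congr rfl fun a _ => (neg_sq _).symm
        _ ≤ (∑ a ∈ t, -(P a - Q a)) ^ 2 := Finset.sum_sq_le_sq_sum_of_nonneg hv_nonneg
        _ = u ^ 2 := by rw [ht']
    rw [hsplit (fun a => (P a - Q a) ^ 2), hDu]
    nlinarith
  -- Step C' : ∑ (P-Q)²/Q ≤ D²/(2m)
  have hstepC' : (∑ a, (P a - Q a) ^ 2 / Q a) ≤ D ^ 2 / (2 * m) := by
    have h1 : (∑ a, (P a - Q a) ^ 2 / Q a) ≤ (∑ a, (P a - Q a) ^ 2) / m := by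
      rw [Finset.sum_div]
      refine Finset.sum_le_sum fun a _ => ?_
      exact div_le_div_of_nonneg_left (sq_nonneg _) hm_pos (hm_le a)
    calc (∑ a, (P a - Q a) ^ 2 / Q a) ≤ (∑ a, (P a - Q a) ^ 2) / m := h1
      _ ≤ (D ^ 2 / 2) / m := by
          exact div_le_div_of_nonneg_right hstepC hm_pos.le
      _ = D ^ 2 / (2 * m) := by rw [div_div]
  -- positivity facts
  have hSig : 0 < ∑ a, P a ^ α * Q a ^ (1 - α) := by
    have : ∃ a, 0 < P a := by
      by_contra h
      push_neg at h
      have : (∑ a, P a) = 0 := Finset.sum_eq_zero fun a _ => le_antisymm (h a) (hP a)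
      rw [hPsum] at this; norm_num at this
    obtain ⟨a1, ha1⟩ := this
    refine Finset.sum_pos' (fun a _ => mul_nonneg (Real.rpow_nonneg (hP a) _)
      (Real.rpow_nonneg (hQ a).le _)) ⟨a1, Finset.mem_univ a1, ?_⟩
    exact mul_pos (Real.rpow_pos_of_pos ha1 _) (Real.rpow_pos_of_pos (hQ a1) _)
  have hS1 : (1 : ℝ) ≤ S := by
    rw [hstepB]
    have : (0:ℝ) ≤ ∑ a, (P a - Q a) ^ 2 / Q a :=
      Finset.sum_nonneg fun a _ => div_nonneg (sq_nonneg _) (hQ a).le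
    linarith
  have hSpos : 0 < S := lt_of_lt_of_le one_pos hS1
  -- final combination
  have hlog1 : Real.log (∑ a, P a ^ α * Q a ^ (1 - α)) ≤ β * Real.log S := by
    calc Real.log (∑ a, P a ^ α * Q a ^ (1 - α)) ≤ Real.log (S ^ β) :=
          Real.log_le_log hSig hstepA
      _ = β * Real.log S := Real.log_rpow hSpos β
  have hlog2 : Real.log S ≤ Real.log (1 + D ^ 2 / (2 * m)) := by
    apply Real.log_le_log hSpos
    rw [hstepB]; linarith
  calc (1 / β) * Real.log (∑ a, P a ^ α * Q a ^ (1 - α))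
      ≤ (1 / β) * (β * Real.log S) := by
        apply mul_le_mul_of_nonneg_left hlog1 (by positivity)
    _ = Real.log S := by field_simp
    _ ≤ Real.log (1 + D ^ 2 / (2 * m)) := hlog2
end

section
/- Let P and Q be probability mass functions on a common finite nonempty set A, with P and Q strictly positive on A, let P_min = min_{a ∈ A} P(a), Q_min = min_{a ∈ A} Q(a), ε = Σ_{a ∈ A} |P(a) − Q(a)|, and let α ∈ (0,1). Then the Rényi divergence of order α (in nats) satisfies D_α(P‖Q) ≤ (α/(1−α))·( ln(1 + ε²/(2·P_min)) − (Q_min/2)·ε² ). -/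
/-!
Jensen's inequality for `log` with weights `Q` gives `-log ∑ P^α Q^(1-α) ≤ α D(Q‖P)`, so it
suffices to bound `D(Q‖P)`. With `X = Q/P` and `m = E_Q X = ∑ Q²/P`, the Jensen gap
`log m - D(Q‖P)` equals `E_Q burg (X/m)`. Comparing `burg` atom by atom with the generator
`triangular` of the triangular discrimination `Δ(P,Q) = ∑ (P-Q)²/(P+Q)`, using that
`√triangular` is subadditive under multiplication on `[1, ∞)`, refines this to
`D(Q‖P) + Q_min Δ(P,Q) ≤ log m`. Finally `ε²/2 ≤ Δ` by Cauchy–Schwarz, and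
`m = 1 + χ²(Q‖P) ≤ 1 + ε²/(2 P_min)` because `∑ (P-Q)² ≤ ε²/2`.
-/

open Finset Real

noncomputable def burg (t : ℝ) : ℝ := t - 1 - log t

noncomputable def triangular (x : ℝ) : ℝ := (x - 1) ^ 2 / (x * (x + 1))

lemma burg_nonneg {t : ℝ} (ht : 0 < t) : 0 ≤ burg t := by
  unfold burg
  linarith [log_le_sub_one_of_pos ht]

lemma burg_mul {x y : ℝ} (hx : 0 < x) (hy : 0 < y) :
    burg (x * y) = burg x + burg y + (x - 1) * (y - 1) := by
  simp only [burg, log_mul hx.ne' hy.ne']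
  ring

lemma triangular_nonneg {x : ℝ} (hx : 0 ≤ x) : 0 ≤ triangular x := by
  unfold triangular
  positivity

lemma triangular_inv {x : ℝ} (hx : 0 < x) : triangular x⁻¹ = x * triangular x := by
  unfold triangular
  field_simp
  ring

lemma two_mul_sub_one_div_add_one_le_log {y : ℝ} (hy : 1 ≤ y) :
    2 * (y - 1) / (y + 1) ≤ log y := by
  have h := sum_range_le_log_div (x := (y - 1) / (y + 1)) (by bound)
    ((div_lt_one (by linarith)).2 (by linarith)) 1
  have hy' : (1 + (y - 1) / (y + 1)) / (1 - (y - 1) / (y + 1)) = y := by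
    field_simp
    ring
  rw [hy'] at h
  norm_num at h
  rw [mul_div_assoc]
  linarith

lemma log_le_sub_inv_div_two {u : ℝ} (hu : 1 ≤ u) : log u ≤ (u - u⁻¹) / 2 := by
  have hu0 : 0 < u := by linarith
  have h := self_le_sinh_iff.2 (log_nonneg hu)
  rwa [sinh_eq, exp_log hu0, exp_neg, exp_log hu0] at h

lemma triangular_le_burg {u : ℝ} (hu : 1 ≤ u) : triangular u ≤ burg u := by
  have hu0 : 0 < u := by linarith
  have hlog := log_le_sub_inv_div_two hu
  have h : triangular u ≤ (u - 1) ^ 2 / (2 * u) :=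
    div_le_div_of_nonneg_left (sq_nonneg _) (by positivity) (by nlinarith)
  have h' : (u - 1) ^ 2 / (2 * u) = u - 1 - (u - u⁻¹) / 2 := by
    field_simp
    ring
  unfold burg
  linarith

lemma triangular_le_burg_inv {y : ℝ} (hy : 1 ≤ y) : triangular y ≤ burg y⁻¹ := by
  have h : triangular y = y⁻¹ - 1 + 2 * (y - 1) / (y + 1) := by
    unfold triangular
    field_simp
    ring
  rw [h, burg, log_inv]
  linarith [two_mul_sub_one_div_add_one_le_log hy]

lemma mul_triangular_le_burg {x : ℝ} (hx0 : 0 < x) (hx1 : x ≤ 1) : x * triangular x ≤ burg x := by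
  simpa [triangular_inv hx0] using triangular_le_burg_inv (one_le_inv_iff₀.2 ⟨hx0, hx1⟩)

lemma triangular_monotoneOn : MonotoneOn triangular (Set.Ici 1) := by
  intro x (hx : 1 ≤ x) y (hy : 1 ≤ y) hxy
  unfold triangular
  rw [div_le_div_iff₀ (by positivity) (by positivity)]
  nlinarith [mul_nonneg (mul_nonneg (sub_nonneg.2 hxy) (sub_nonneg.2 hx)) (sub_nonneg.2 hy),
    mul_pos (zero_lt_one.trans_le hx) (zero_lt_one.trans_le hy)]

lemma sq_triangular_mul_sub_le {u v : ℝ} (hu : 1 ≤ u) (hv : 1 ≤ v) :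
    (triangular (u * v) - triangular u - triangular v) ^ 2 ≤ 4 * (triangular u * triangular v) := by
  obtain ⟨a, ha, rfl⟩ : ∃ a, 0 ≤ a ∧ u = 1 + a := ⟨u - 1, by linarith, by ring⟩
  obtain ⟨b, hb, rfl⟩ : ∃ b, 0 ≤ b ∧ v = 1 + b := ⟨v - 1, by linarith, by ring⟩
  lift a to NNReal using ha
  lift b to NNReal using hb
  unfold triangular
  field_simp
  rw [← sub_nonneg]
  ring_nf
  positivity

lemma sqrt_triangular_mul_le {u v : ℝ} (hu : 1 ≤ u) (hv : 1 ≤ v) :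
    √(triangular (u * v)) ≤ √(triangular u) + √(triangular v) := by
  have hTu := triangular_nonneg (zero_le_one.trans hu)
  have hTv := triangular_nonneg (zero_le_one.trans hv)
  have h := (le_abs_self _).trans (abs_le_sqrt (sq_triangular_mul_sub_le hu hv))
  rw [show (4 : ℝ) = 2 ^ 2 by norm_num, sqrt_mul' _ (by positivity), sqrt_sq zero_le_two,
    sqrt_mul' _ hTv] at h
  rw [sqrt_le_left (by positivity), add_sq, sq_sqrt hTu, sq_sqrt hTv]
  linarith

lemma mul_add_sq_le {s : ℝ} (hs : s < 1) (a b : ℝ) :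
    s * (a + b) ^ 2 ≤ a ^ 2 + s * b ^ 2 / (1 - s) := by
  have h1s : 0 < 1 - s := by linarith
  have key : a ^ 2 + s * b ^ 2 / (1 - s) - s * (a + b) ^ 2 = ((1 - s) * a - s * b) ^ 2 / (1 - s) := by
    field_simp
    ring
  nlinarith [div_nonneg (sq_nonneg ((1 - s) * a - s * b)) h1s.le]

lemma mul_triangular_add_burg_inv_le {x m s : ℝ} (hx0 : 0 < x) (hx1 : x ≤ 1) (hm : 1 ≤ m)
    (hsx : s ≤ x) : s * triangular x + burg m⁻¹ ≤ burg (x / m) := by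
  have hm0 : 0 < m := by linarith
  have hcross : 0 ≤ (x - 1) * (m⁻¹ - 1) :=
    mul_nonneg_of_nonpos_of_nonpos (by linarith) (by linarith [inv_le_one_of_one_le₀ hm])
  rw [div_eq_mul_inv, burg_mul hx0 (inv_pos.2 hm0)]
  nlinarith [mul_le_mul_of_nonneg_right hsx (triangular_nonneg hx0.le),
    mul_triangular_le_burg hx0 hx1]

lemma mul_triangular_le_burg_div_add {x m s : ℝ} (hx : 1 ≤ x) (hm : 1 ≤ m) (hs0 : 0 ≤ s)
    (hs1 : s < 1) : s * triangular x ≤ burg (x / m) + s * burg m⁻¹ / (1 - s) := by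
  have hm0 : 0 < m := by linarith
  have hB := burg_nonneg (div_pos (by linarith) hm0 : 0 < x / m)
  have hH := burg_nonneg (inv_pos.2 hm0)
  rcases le_total x m with hxm | hmx
  · have h : triangular x ≤ burg m⁻¹ :=
      (triangular_monotoneOn hx hm hxm).trans (triangular_le_burg_inv hm)
    have : s * burg m⁻¹ ≤ s * burg m⁻¹ / (1 - s) :=
      le_div_self (by positivity) (by linarith) (by linarith)
    nlinarith [mul_le_mul_of_nonneg_left h hs0]
  · have hxm : 1 ≤ x / m := (one_le_div hm0).2 hmx
    have hsqrt : √(triangular x) ≤ √(burg (x / m)) + √(burg m⁻¹) := calc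
      √(triangular x) = √(triangular (x / m * m)) := by rw [div_mul_cancel₀ _ hm0.ne']
      _ ≤ √(triangular (x / m)) + √(triangular m) := sqrt_triangular_mul_le hxm hm
      _ ≤ √(burg (x / m)) + √(burg m⁻¹) := by
        gcongr
        exacts [triangular_le_burg hxm, triangular_le_burg_inv hm]
    have hT : triangular x ≤ (√(burg (x / m)) + √(burg m⁻¹)) ^ 2 := by
      rw [← sq_sqrt (triangular_nonneg (zero_le_one.trans hx))]
      gcongr
    calc s * triangular x ≤ s * (√(burg (x / m)) + √(burg m⁻¹)) ^ 2 := by gcongr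
      _ ≤ burg (x / m) + s * burg m⁻¹ / (1 - s) := by
        simpa only [sq_sqrt hB, sq_sqrt hH] using mul_add_sq_le hs1 √(burg (x / m)) √(burg m⁻¹)

lemma sum_sq_le_sq_sum_abs_div_two {ι : Type*} (s : Finset ι) (f : ι → ℝ)
    (hf : ∑ i ∈ s, f i = 0) : ∑ i ∈ s, f i ^ 2 ≤ (∑ i ∈ s, |f i|) ^ 2 / 2 := by
  have hsq : ∀ i ∈ s, f i ^ 2 = (f i)⁺ ^ 2 + (f i)⁻ ^ 2 := by
    intro i _
    rcases le_total 0 (f i) with h | h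
    · simp [posPart_eq_self.2 h, negPart_eq_zero.2 h]
    · simp [posPart_eq_zero.2 h, negPart_eq_neg.2 h]
  have hsub : ∑ i ∈ s, (f i)⁺ - ∑ i ∈ s, (f i)⁻ = 0 := by
    simp only [← sum_sub_distrib, posPart_sub_negPart, hf]
  have hadd : ∑ i ∈ s, (f i)⁺ + ∑ i ∈ s, (f i)⁻ = ∑ i ∈ s, |f i| := by
    simp only [← sum_add_distrib, posPart_add_negPart]
  calc ∑ i ∈ s, f i ^ 2 = ∑ i ∈ s, (f i)⁺ ^ 2 + ∑ i ∈ s, (f i)⁻ ^ 2 := by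
        rw [← sum_add_distrib]
        exact sum_congr rfl hsq
    _ ≤ (∑ i ∈ s, (f i)⁺) ^ 2 + (∑ i ∈ s, (f i)⁻) ^ 2 :=
        add_le_add (sum_sq_le_sq_sum_of_nonneg fun i _ => posPart_nonneg _)
          (sum_sq_le_sq_sum_of_nonneg fun i _ => negPart_nonneg _)
    _ = (∑ i ∈ s, |f i|) ^ 2 / 2 := by
        rw [← hadd, show ∑ i ∈ s, (f i)⁻ = ∑ i ∈ s, (f i)⁺ by linarith]
        ring

section Divergences

variable {A : Type*} [Fintype A] {P Q : A → ℝ}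

noncomputable def relEntropy (Q P : A → ℝ) : ℝ := ∑ a, Q a * log (Q a / P a)

noncomputable def triDiscr (P Q : A → ℝ) : ℝ := ∑ a, (P a - Q a) ^ 2 / (P a + Q a)

lemma triDiscr_eq_sum_mul_triangular (hP : ∀ a, 0 < P a) (hQ : ∀ a, 0 < Q a) :
    triDiscr P Q = ∑ a, Q a * triangular (Q a / P a) := by
  refine sum_congr rfl fun a _ => ?_
  have := hP a
  have := hQ a
  unfold triangular
  field_simp
  ring

lemma sq_sum_abs_sub_div_two_le_triDiscr (hP : ∀ a, 0 < P a) (hQ : ∀ a, 0 < Q a)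
    (hPsum : ∑ a, P a = 1) (hQsum : ∑ a, Q a = 1) :
    (∑ a, |P a - Q a|) ^ 2 / 2 ≤ triDiscr P Q := by
  have h := sq_sum_div_le_sum_sq_div univ (fun a => |P a - Q a|)
    (g := fun a => P a + Q a) fun a _ => add_pos (hP a) (hQ a)
  simpa only [triDiscr, sum_add_distrib, hPsum, hQsum, one_add_one_eq_two, sq_abs] using h

lemma sum_sq_div_eq_one_add (hP : ∀ a, P a ≠ 0) (hPsum : ∑ a, P a = 1)
    (hQsum : ∑ a, Q a = 1) : ∑ a, Q a ^ 2 / P a = 1 + ∑ a, (Q a - P a) ^ 2 / P a := by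
  have h : ∀ a ∈ univ, (Q a - P a) ^ 2 / P a = Q a ^ 2 / P a - 2 * Q a + P a := by
    intro a _
    field_simp [hP a]
    ring
  rw [sum_congr rfl h, sum_add_distrib, sum_sub_distrib, ← mul_sum, hPsum, hQsum]
  ring

lemma one_le_sum_sq_div (hP : ∀ a, 0 < P a) (hPsum : ∑ a, P a = 1) (hQsum : ∑ a, Q a = 1) :
    1 ≤ ∑ a, Q a ^ 2 / P a := by
  rw [sum_sq_div_eq_one_add (fun a => (hP a).ne') hPsum hQsum]
  linarith [sum_nonneg fun a (_ : a ∈ univ) => div_nonneg (sq_nonneg (Q a - P a)) (hP a).le]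

lemma sum_sq_div_le_one_add (hP : ∀ a, 0 < P a) (hPsum : ∑ a, P a = 1)
    (hQsum : ∑ a, Q a = 1) {p : ℝ} (hp : 0 < p) (hpP : ∀ a, p ≤ P a) :
    ∑ a, Q a ^ 2 / P a ≤ 1 + (∑ a, |P a - Q a|) ^ 2 / (2 * p) := by
  have hdiff : ∑ a, (P a - Q a) = 0 := by rw [sum_sub_distrib, hPsum, hQsum, sub_self]
  have hsq := sum_sq_le_sq_sum_abs_div_two univ (fun a => P a - Q a) hdiff
  rw [sum_sq_div_eq_one_add (fun a => (hP a).ne') hPsum hQsum, add_le_add_iff_left]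
  calc ∑ a, (Q a - P a) ^ 2 / P a ≤ ∑ a, (P a - Q a) ^ 2 / p :=
        sum_le_sum fun a _ => by
          rw [← neg_sub, neg_sq]
          exact div_le_div_of_nonneg_left (sq_nonneg _) hp (hpP a)
    _ ≤ (∑ a, |P a - Q a|) ^ 2 / (2 * p) := by
        rw [← sum_div, ← div_div]
        gcongr

lemma sum_mul_burg_div_eq (hP : ∀ a, 0 < P a) (hQ : ∀ a, 0 < Q a) (hQsum : ∑ a, Q a = 1)
    {m : ℝ} (hm : m = ∑ a, Q a ^ 2 / P a) (hm0 : 0 < m) :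
    ∑ a, Q a * burg (Q a / P a / m) = log m - relEntropy Q P := by
  have h : ∀ a ∈ univ, Q a * burg (Q a / P a / m) =
      Q a ^ 2 / P a / m - Q a - Q a * log (Q a / P a) + Q a * log m := by
    intro a _
    rw [burg, log_div (div_pos (hQ a) (hP a)).ne' hm0.ne']
    ring
  rw [sum_congr rfl h, sum_add_distrib, sum_sub_distrib, sum_sub_distrib, ← sum_div, ← hm,
    div_self hm0.ne', ← sum_mul, hQsum, relEntropy]
  ring

lemma le_sum_filter_le [Nonempty A] (hQ : ∀ a, 0 ≤ Q a) (hsum : ∑ a, P a = ∑ a, Q a) {s : ℝ}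
    (hsQ : ∀ a, s ≤ Q a) : s ≤ ∑ a with Q a ≤ P a, Q a := by
  obtain ⟨b, hb⟩ : {a | Q a ≤ P a}.toFinset.Nonempty := by
    by_contra h
    have := sum_lt_sum_of_nonempty univ_nonempty fun a _ =>
      not_le.1 fun ha => h ⟨a, by simpa using ha⟩
    linarith
  exact (hsQ b).trans (single_le_sum (fun a _ => hQ a) (by simpa using hb))

lemma relEntropy_add_mul_triDiscr_le_log [Nonempty A] (hP : ∀ a, 0 < P a)
    (hPsum : ∑ a, P a = 1) (hQ : ∀ a, 0 < Q a) (hQsum : ∑ a, Q a = 1) {s : ℝ} (hs0 : 0 ≤ s)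
    (hsQ : ∀ a, s ≤ Q a) : relEntropy Q P + s * triDiscr P Q ≤ log (∑ a, Q a ^ 2 / P a) := by
  set m := ∑ a, Q a ^ 2 / P a with hm_def
  have hm : 1 ≤ m := one_le_sum_sq_div hP hPsum hQsum
  set h := burg m⁻¹
  have hh : 0 ≤ h := burg_nonneg (by positivity)
  set g : A → ℝ := fun a => Q a * (burg (Q a / P a / m) - s * triangular (Q a / P a))
  suffices 0 ≤ ∑ a, g a by
    have hg : ∑ a, g a = log m - relEntropy Q P - s * triDiscr P Q := by
      simp only [g, mul_sub, sum_sub_distrib, sum_mul_burg_div_eq hP hQ hQsum hm_def (by linarith),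
        triDiscr_eq_sum_mul_triangular hP hQ, mul_sum, mul_left_comm s]
    linarith
  have hL : s ≤ ∑ a with Q a ≤ P a, Q a :=
    le_sum_filter_le (fun a => (hQ a).le) (hPsum.trans hQsum.symm) hsQ
  have hH : ∑ a with Q a ≤ P a, Q a + ∑ a with ¬Q a ≤ P a, Q a = 1 :=
    (sum_filter_add_sum_filter_not _ _ _).trans hQsum
  -- Where `Q ≤ P` each atom gains at least `Q a * h`; elsewhere it loses at most
  -- `Q a * s * h / (1 - s)`, and the mass bounds `hL`, `hH` make the two balance.
  have hgL : s * h ≤ ∑ a with Q a ≤ P a, g a := by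
    have hPle : ∀ a, P a ≤ 1 := fun a => hPsum ▸ single_le_sum (fun i _ => (hP i).le) (mem_univ a)
    calc s * h ≤ (∑ a with Q a ≤ P a, Q a) * h := mul_le_mul_of_nonneg_right hL hh
      _ ≤ ∑ a with Q a ≤ P a, g a := by
        rw [sum_mul]
        refine sum_le_sum fun a ha => mul_le_mul_of_nonneg_left ?_ (hQ a).le
        have hx := mul_triangular_add_burg_inv_le (div_pos (hQ a) (hP a))
          ((div_le_one (hP a)).2 (mem_filter.1 ha).2) hm
          ((hsQ a).trans (le_div_self (hQ a).le (hP a) (hPle a)))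
        linarith
  have hgH : -(s * h) ≤ ∑ a with ¬Q a ≤ P a, g a := by
    rcases (univ.filter fun a => ¬Q a ≤ P a).eq_empty_or_nonempty with hempty | ⟨c, hc⟩
    · rw [hempty, sum_empty]
      exact neg_nonpos.2 (mul_nonneg hs0 hh)
    have hs1 : s < 1 := by linarith [single_le_sum (fun i _ => (hQ i).le) hc, hQ c]
    have hloss := mul_le_mul_of_nonneg_right (show ∑ a with ¬Q a ≤ P a, Q a ≤ 1 - s by linarith)
      (div_nonneg (mul_nonneg hs0 hh) (by linarith) : 0 ≤ s * h / (1 - s))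
    rw [mul_div_cancel₀ _ (by linarith)] at hloss
    calc -(s * h) ≤ ∑ a with ¬Q a ≤ P a, -(Q a * (s * h / (1 - s))) := by
          rw [sum_neg_distrib, ← sum_mul]
          linarith
      _ ≤ ∑ a with ¬Q a ≤ P a, g a := by
        refine sum_le_sum fun a ha => ?_
        have hx := mul_triangular_le_burg_div_add
          ((one_le_div (hP a)).2 (not_le.1 (mem_filter.1 ha).2).le) hm hs0 hs1
        nlinarith [mul_le_mul_of_nonneg_left hx (hQ a).le]
  rw [← sum_filter_add_sum_filter_not univ fun a => Q a ≤ P a]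
  linarith

lemma relEntropy_le_log_one_add_sub_mul_sq [Nonempty A] (hP : ∀ a, 0 < P a)
    (hPsum : ∑ a, P a = 1) (hQ : ∀ a, 0 < Q a) (hQsum : ∑ a, Q a = 1) :
    relEntropy Q P ≤ log (1 + (∑ a, |P a - Q a|) ^ 2 / (2 * ⨅ a, P a)) -
      ((⨅ a, Q a) / 2) * (∑ a, |P a - Q a|) ^ 2 := by
  have hPmin : 0 < ⨅ a, P a := by
    obtain ⟨a, ha⟩ := exists_eq_ciInf_of_finite (f := P)
    exact ha ▸ hP a
  have hQmin : 0 ≤ ⨅ a, Q a := le_ciInf fun a => (hQ a).le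
  have hT := relEntropy_add_mul_triDiscr_le_log hP hPsum hQ hQsum hQmin
    (ciInf_le (Finite.bddBelow_range Q))
  have hΔ := sq_sum_abs_sub_div_two_le_triDiscr hP hQ hPsum hQsum
  have hm := sum_sq_div_le_one_add hP hPsum hQsum hPmin (ciInf_le (Finite.bddBelow_range P))
  have hlog := log_le_log (by linarith [one_le_sum_sq_div hP hPsum hQsum]) hm
  nlinarith [mul_le_mul_of_nonneg_left hΔ hQmin]

lemma neg_mul_relEntropy_le_log_sum_rpow_mul_rpow (hP : ∀ a, 0 < P a) (hQ : ∀ a, 0 < Q a)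
    (hQsum : ∑ a, Q a = 1) (α : ℝ) :
    -(α * relEntropy Q P) ≤ log (∑ a, P a ^ α * Q a ^ (1 - α)) := by
  have h := strictConcaveOn_log_Ioi.concaveOn.le_map_sum (t := univ) (w := Q)
    (p := fun a => (P a / Q a) ^ α) (fun a _ => (hQ a).le) hQsum
    (fun a _ => rpow_pos_of_pos (div_pos (hP a) (hQ a)) α)
  have hlog : ∀ a, Q a • log ((P a / Q a) ^ α) = -(α * (Q a * log (Q a / P a))) := by
    intro a
    rw [smul_eq_mul, log_rpow (div_pos (hP a) (hQ a)), ← inv_div, log_inv]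
    ring
  have hrpow : ∀ a, Q a • (P a / Q a) ^ α = P a ^ α * Q a ^ (1 - α) := by
    intro a
    rw [smul_eq_mul, div_rpow (hP a).le (hQ a).le, rpow_sub (hQ a), rpow_one]
    field_simp
  simpa only [relEntropy, hlog, hrpow, sum_neg_distrib, ← mul_sum] using h

end Divergences

theorem renyi_alpha_le_tv_zero_one {A : Type*} [Fintype A] [Nonempty A]
    (P Q : A → ℝ) (hP : ∀ a, 0 < P a) (hPsum : ∑ a, P a = 1)
    (hQ : ∀ a, 0 < Q a) (hQsum : ∑ a, Q a = 1)
    (α : ℝ) (hα : α ∈ Set.Ioo (0 : ℝ) 1) :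
    (1 / (α - 1)) * Real.log (∑ a, P a ^ α * Q a ^ (1 - α)) ≤
      (α / (1 - α)) *
        (Real.log (1 + (∑ a, |P a - Q a|) ^ 2 / (2 * ⨅ a, P a)) -
          ((⨅ a, Q a) / 2) * (∑ a, |P a - Q a|) ^ 2) := by
  obtain ⟨hα0, hα1⟩ := hα
  have hJensen := neg_mul_relEntropy_le_log_sum_rpow_mul_rpow hP hQ hQsum α
  have hPinsker := relEntropy_le_log_one_add_sub_mul_sq hP hPsum hQ hQsum
  rw [one_div_mul_eq_div, ← neg_div_neg_eq, neg_sub, div_mul_eq_mul_div,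
    div_le_div_iff_of_pos_right (sub_pos.2 hα1)]
  nlinarith [mul_le_mul_of_nonneg_left hPinsker hα0.le]
end

section
/- Let f : (0,∞) → ℝ be a convex function with f(1) = 0 such that the function g : (0,∞) → ℝ defined by g(t) = −t·f(t) is also convex. Let P and Q be probability mass functions on a common finite nonempty set A, with P and Q strictly positive on A. Then (min_{a ∈ A} P(a)/Q(a))·D_f(P‖Q) ≤ −D_g(P‖Q) − f(1 + χ²(P,Q)) ≤ (max_{a ∈ A} P(a)/Q(a))·D_f(P‖Q), where D_f(P‖Q) = Σ_{a ∈ A} Q(a)·f(P(a)/Q(a)) is the f-divergence and χ²(P,Q) = Σ_{a ∈ A} (P(a) − Q(a))²/Q(a). -/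
/-!
With `r = P / Q`, `D_f(P‖Q) = ∑ Q f(r) - f(∑ Q r)` is the Jensen gap of `f` at the points `r`
under the weights `Q` (as `∑ Q r = 1` and `f 1 = 0`), while `-D_g(P‖Q) - f(1 + χ²(P,Q))` is
`∑ P f(r) - f(∑ P r)`, the Jensen gap at the same points under the weights `P`. Jensen gaps
under two weight vectors compare as the weights do: if `c q ≤ p`, then `p` is `c q` plus the
nonnegative remainder `p - c q`, and Jensen's inequality for these weights, with `∑ q x` as one
of the points, gives `c • gap_q ≤ gap_p`. Take `c = min r` for the lower bound, and `q`, `p`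
swapped with `c = (max r)⁻¹` for the upper one.
-/

open Finset

section JensenGap

variable {𝕜 E β ι : Type*} [Field 𝕜] [LinearOrder 𝕜] [IsStrictOrderedRing 𝕜] [AddCommGroup E]
  [AddCommGroup β] [PartialOrder β] [IsOrderedAddMonoid β] [Module 𝕜 E] [Module 𝕜 β]
  [IsStrictOrderedModule 𝕜 β] [Fintype ι]

def jensenGap (f : E → β) (w : ι → 𝕜) (x : ι → E) : β :=
  ∑ i, w i • f (x i) - f (∑ i, w i • x i)

variable {s : Set E} {f : E → β} {p q : ι → 𝕜} {x : ι → E}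

theorem ConvexOn.smul_jensenGap_le_jensenGap (hf : ConvexOn 𝕜 s f) (hx : ∀ i, x i ∈ s)
    (hq : ∀ i, 0 ≤ q i) (hp1 : ∑ i, p i = 1) (hq1 : ∑ i, q i = 1) {c : 𝕜} (hc : 0 ≤ c)
    (hcq : ∀ i, c * q i ≤ p i) :
    c • jensenGap f q x ≤ jensenGap f p x := by
  set y := ∑ i, q i • x i
  have hy : y ∈ s := hf.1.sum_mem (fun i _ => hq i) hq1 (fun i _ => hx i)
  let w : Option ι → 𝕜 := fun o => o.elim c fun i => p i - c * q i
  let z : Option ι → E := fun o => o.elim y x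
  have hjensen := hf.map_sum_le (t := univ) (w := w) (p := z)
    (by rintro (_ | i) _ <;> simp [w, hc, hcq])
    (by simp [w, Fintype.sum_option, sum_sub_distrib, ← mul_sum, hp1, hq1])
    (by rintro (_ | i) _ <;> simp [z, hy, hx])
  have hbary : ∑ o, w o • z o = ∑ i, p i • x i := by
    simp [w, z, y, Fintype.sum_option, sub_smul, sum_sub_distrib, mul_smul, ← smul_sum]
  rw [hbary] at hjensen
  simp only [Fintype.sum_option, w, z, Option.elim, sub_smul, sum_sub_distrib, mul_smul,
    ← smul_sum] at hjensen
  unfold jensenGap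
  rw [smul_sub]
  calc c • ∑ i, q i • f (x i) - c • f y
      = ∑ i, p i • f (x i) - (c • f y + (∑ i, p i • f (x i) - c • ∑ i, q i • f (x i))) := by abel
    _ ≤ _ := sub_le_sub_left hjensen _

theorem ConvexOn.jensenGap_le_smul_jensenGap (hf : ConvexOn 𝕜 s f) (hx : ∀ i, x i ∈ s)
    (hp : ∀ i, 0 ≤ p i) (hp1 : ∑ i, p i = 1) (hq1 : ∑ i, q i = 1) {C : 𝕜}
    (hpq : ∀ i, p i ≤ C * q i) :
    jensenGap f p x ≤ C • jensenGap f q x := by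
  have hC : 0 < C := by
    have : ∑ i, p i ≤ ∑ i, C * q i := sum_le_sum fun i _ => hpq i
    rw [← mul_sum, hp1, hq1, mul_one] at this
    exact zero_lt_one.trans_le this
  have hgap := hf.smul_jensenGap_le_jensenGap hx hp hq1 hp1 (inv_nonneg.2 hC.le)
    fun i => (inv_mul_le_iff₀ hC).2 (hpq i)
  calc jensenGap f p x = C • C⁻¹ • jensenGap f p x := (smul_inv_smul₀ hC.ne' _).symm
    _ ≤ C • jensenGap f q x := smul_le_smul_of_nonneg_left hgap hC.le

end JensenGap

theorem one_add_sum_sq_sub_div_eq_sum_mul_div {A : Type*} [Fintype A] (P Q : A → ℝ)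
    (hQ : ∀ a, Q a ≠ 0) (hPsum : ∑ a, P a = 1) (hQsum : ∑ a, Q a = 1) :
    1 + ∑ a, (P a - Q a) ^ 2 / Q a = ∑ a, P a * (P a / Q a) := by
  have hterm : ∀ a, (P a - Q a) ^ 2 / Q a = P a * (P a / Q a) - 2 * P a + Q a := fun a => by
    field_simp [hQ a]
    ring
  simp only [hterm, sum_add_distrib, sum_sub_distrib, ← mul_sum, hPsum, hQsum]
  ring

theorem f_divergence_jensen_refinement_general {A : Type*} [Fintype A]
    (f g : ℝ → ℝ) (hf : ConvexOn ℝ (Set.Ioi (0 : ℝ)) f) (hf1 : f 1 = 0)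
    (hg_def : ∀ t > (0 : ℝ), g t = -t * f t)
    (P Q : A → ℝ) (hP : ∀ a, 0 < P a) (hPsum : ∑ a, P a = 1)
    (hQ : ∀ a, 0 < Q a) (hQsum : ∑ a, Q a = 1) :
    (⨅ a, P a / Q a) * ∑ a, Q a * f (P a / Q a) ≤
        -(∑ a, Q a * g (P a / Q a)) - f (1 + ∑ a, (P a - Q a) ^ 2 / Q a) ∧
      -(∑ a, Q a * g (P a / Q a)) - f (1 + ∑ a, (P a - Q a) ^ 2 / Q a) ≤
        (⨆ a, P a / Q a) * ∑ a, Q a * f (P a / Q a) := by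
  set r : A → ℝ := fun a => P a / Q a
  have hr : ∀ a, r a ∈ Set.Ioi 0 := fun a => div_pos (hP a) (hQ a)
  have hQr : ∀ a, Q a * r a = P a := fun a => mul_div_cancel₀ _ (hQ a).ne'
  have hgap_Q : jensenGap f Q r = ∑ a, Q a * f (r a) := by
    simp only [jensenGap, smul_eq_mul, hQr, hPsum, hf1, sub_zero]
  have hgap_P : jensenGap f P r =
      -(∑ a, Q a * g (r a)) - f (1 + ∑ a, (P a - Q a) ^ 2 / Q a) := by
    have hg_sum : ∑ a, P a * f (r a) = -(∑ a, Q a * g (r a)) := by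
      simp only [← sum_neg_distrib, hg_def _ (hr _), neg_mul, mul_neg, neg_neg, ← mul_assoc, hQr]
    rw [one_add_sum_sq_sub_div_eq_sum_mul_div P Q (fun a => (hQ a).ne') hPsum hQsum]
    simp only [jensenGap, smul_eq_mul, hg_sum, r]
  rw [← hgap_Q, ← hgap_P]
  constructor
  · exact hf.smul_jensenGap_le_jensenGap hr (fun a => (hQ a).le) hPsum hQsum
      (Real.iInf_nonneg fun a => (hr a).le)
      fun a => (le_div_iff₀ (hQ a)).1 (ciInf_le (Finite.bddBelow_range r) a)
  · exact hf.jensenGap_le_smul_jensenGap hr (fun a => (hP a).le) hPsum hQsum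
      fun a => (div_le_iff₀ (hQ a)).1 (le_ciSup (Finite.bddAbove_range r) a)

theorem f_divergence_jensen_refinement {A : Type*} [Fintype A] [Nonempty A]
    (f g : ℝ → ℝ) (hf : ConvexOn ℝ (Set.Ioi (0 : ℝ)) f) (hf1 : f 1 = 0)
    (hg_def : ∀ t > (0 : ℝ), g t = -t * f t) (hg : ConvexOn ℝ (Set.Ioi (0 : ℝ)) g)
    (P Q : A → ℝ) (hP : ∀ a, 0 < P a) (hPsum : ∑ a, P a = 1)
    (hQ : ∀ a, 0 < Q a) (hQsum : ∑ a, Q a = 1) :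
    (⨅ a, P a / Q a) * ∑ a, Q a * f (P a / Q a) ≤
        -(∑ a, Q a * g (P a / Q a)) - f (1 + ∑ a, (P a - Q a) ^ 2 / Q a) ∧
      -(∑ a, Q a * g (P a / Q a)) - f (1 + ∑ a, (P a - Q a) ^ 2 / Q a) ≤
        (⨆ a, P a / Q a) * ∑ a, Q a * f (P a / Q a) :=
  f_divergence_jensen_refinement_general f g hf hf1 hg_def P Q hP hPsum hQ hQsum
end
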